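/- arXiv:1103.1287 — 6 statements merged into one kernel-verified Lean document; each statement's English description precedes it below -/
import Mathlib

section
/- (Necessary and sufficient Schmidt-number condition.) Let ρ be a density operator on H (positive semidefinite with trace one) and 1 ≤ r ≤ min(d_A, d_B). Then ρ has Schmidt number greater than r (i.e., ρ ∉ S_r) if and only if there exists a Hermitian operator L on H with Tr(ρ L) > f_r(L). -/
open scoped ComplexOrder

noncomputable section

namespace SNpaper

/-- Elementary tensor `x ⊗ y` of vectors, as a vector on the product index set. -/
def tensorVec {dA dB : ℕ} (x : Fin dA → ℂ) (y : Fin dB → ℂ) : Fin dA × Fin dB → ℂ :=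
  fun p => x p.1 * y p.2

/-- `ψ` has Schmidt rank at most `r`. -/
def SchmidtRankLE {dA dB : ℕ} (r : ℕ) (ψ : Fin dA × Fin dB → ℂ) : Prop :=
  ∃ (x : Fin r → Fin dA → ℂ) (y : Fin r → Fin dB → ℂ),
    ψ = ∑ k, tensorVec (x k) (y k)

/-- The expectation value `⟨ψ, L ψ⟩`. -/
def expVal {dA dB : ℕ} (L : Matrix (Fin dA × Fin dB) (Fin dA × Fin dB) ℂ)
    (ψ : Fin dA × Fin dB → ℂ) : ℂ :=
  dotProduct (star ψ) (L.mulVec ψ)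

/-- `ψ` is a unit vector. -/
def IsUnitVec {dA dB : ℕ} (ψ : Fin dA × Fin dB → ℂ) : Prop :=
  dotProduct (star ψ) ψ = 1

/-- `f_r(L)`: the maximal expectation value of `L` on unit vectors of Schmidt rank at most `r`. -/
def fr {dA dB : ℕ} (r : ℕ) (L : Matrix (Fin dA × Fin dB) (Fin dA × Fin dB) ℂ) : ℝ :=
  sSup { t | ∃ ψ, IsUnitVec ψ ∧ SchmidtRankLE r ψ ∧ (expVal L ψ).re = t }

/-- The rank-one projector `|ψ⟩⟨ψ|` as a matrix. -/
def projOp {n : Type*} (ψ : n → ℂ) : Matrix n n ℂ :=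
  Matrix.vecMulVec ψ (star ψ)

/-- `S_r`: states of Schmidt number at most `r` (finite convex combinations of projectors
onto unit vectors of Schmidt rank at most `r`). -/
def SNle (dA dB r : ℕ) : Set (Matrix (Fin dA × Fin dB) (Fin dA × Fin dB) ℂ) :=
  { σ | ∃ (N : ℕ) (p : Fin N → ℝ) (ψ : Fin N → (Fin dA × Fin dB → ℂ)),
      (∀ i, 0 ≤ p i) ∧ (∑ i, p i = 1) ∧
      (∀ i, IsUnitVec (ψ i)) ∧ (∀ i, SchmidtRankLE r (ψ i)) ∧
      σ = ∑ i, (p i : ℂ) • projOp (ψ i) }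

/-- An orthonormal family of vectors. -/
def ONFam {n m : ℕ} (e : Fin m → Fin n → ℂ) : Prop :=
  ∀ k l, dotProduct (star (e k)) (e l) = if k = l then 1 else 0


/-! Every vector of Schmidt rank `≤ r` is `∑ⱼ uⱼ ⊗ ⟨uⱼ|ψ⟩`, where the `uⱼ` are an orthonormal
basis of the span of its left factors, padded with zeros; for a unit vector all these factors lie
in the unit ball, by Cauchy–Schwarz. Hence the unit vectors of Schmidt rank `≤ r` form a compact
set, and by Carathéodory `S_r`, the convex hull of their projectors, is compact and convex. A
state outside `S_r` is strictly separated from it by a real linear functional, which on Hermitian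
matrices has the form `A ↦ Re Tr(A L)` with `L` Hermitian. Conversely `σ ↦ Re Tr(σ L)` is linear
and bounded by `f_r(L)` on the generating projectors, hence on all of `S_r`. -/

open Set Module Function Matrix Metric

instance _root_.Matrix.instLocallyConvexSpace {𝕜 m n α : Type*} [Semiring 𝕜] [PartialOrder 𝕜]
    [AddCommMonoid α] [TopologicalSpace α] [Module 𝕜 α] [LocallyConvexSpace 𝕜 α] :
    LocallyConvexSpace 𝕜 (Matrix m n α) :=
  Pi.locallyConvexSpace

theorem _root_.isCompact_convexHull {E : Type*} [AddCommGroup E] [Module ℝ E]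
    [TopologicalSpace E] [ContinuousAdd E] [ContinuousSMul ℝ E] [FiniteDimensional ℝ E]
    {s : Set E} (hs : IsCompact s) : IsCompact (convexHull ℝ s) := by
  obtain rfl | ⟨z₀, hz₀⟩ := s.eq_empty_or_nonempty
  · simp
  let D := finrank ℝ E + 1
  suffices convexHull ℝ s = (fun wz : (Fin D → ℝ) × (Fin D → E) => ∑ i, wz.1 i • wz.2 i) ''
      (stdSimplex ℝ (Fin D) ×ˢ univ.pi fun _ => s) by
    rw [this]
    exact ((isCompact_stdSimplex ℝ (Fin D)).prod (isCompact_univ_pi fun _ => hs)).image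
      (by fun_prop)
  refine subset_antisymm (fun x hx => ?_) ?_
  · obtain ⟨ι, _, z, w, hzs, hz, hw₀, hw₁, rfl⟩ := eq_pos_convex_span_of_mem_convexHull hx
    -- Carathéodory: the points can be taken affinely independent, so there are at most `D`
    have hcard : Fintype.card ι ≤ D :=
      hz.card_le_finrank_succ.trans (Nat.succ_le_succ (Submodule.finrank_le _))
    let e : ι ↪ Fin D := (Fintype.equivFin ι).toEmbedding.trans (Fin.castLEEmb hcard)
    refine ⟨(extend e w 0, extend e z fun _ => z₀), ⟨⟨fun j => ?_, ?_⟩, fun j _ => ?_⟩, ?_⟩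
    · by_cases hj : j ∈ range e
      · obtain ⟨i, rfl⟩ := hj
        simpa [e.injective.extend_apply] using (hw₀ i).le
      · simp [extend_apply' _ _ _ hj]
    · rw [← hw₁]
      exact (Fintype.sum_of_injective e e.injective w (extend e w 0)
        (fun j hj => extend_apply' _ _ _ hj) fun i => (e.injective.extend_apply _ _ _).symm).symm
    · by_cases hj : j ∈ range e
      · obtain ⟨i, rfl⟩ := hj
        simpa [e.injective.extend_apply] using hzs (mem_range_self i)
      · simpa [extend_apply' _ _ _ hj] using hz₀
    · exact (Fintype.sum_of_injective e e.injective _ _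
        (fun j hj => by simp [extend_apply' _ _ _ hj])
        fun i => by simp [e.injective.extend_apply]).symm
  · rintro _ ⟨⟨w, z⟩, ⟨hw, hz⟩, rfl⟩
    exact mem_convexHull_of_exists_fintype w z hw.1 hw.2 (fun i => hz i trivial) rfl

theorem _root_.Submodule.exists_norm_le_one_sum_inner_smul_eq {𝕜 E : Type*} [RCLike 𝕜]
    [NormedAddCommGroup E] [InnerProductSpace 𝕜 E] (V : Submodule 𝕜 E) [FiniteDimensional 𝕜 V]
    {r : ℕ} (hV : finrank 𝕜 V ≤ r) :
    ∃ u : Fin r → E, (∀ j, ‖u j‖ ≤ 1) ∧ ∀ v ∈ V, ∑ j, inner 𝕜 (u j) v • u j = v := by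
  let b := stdOrthonormalBasis 𝕜 V
  have he := Fin.castLE_injective hV
  refine ⟨extend (Fin.castLE hV) (fun i => (b i : E)) 0, fun j => ?_, fun v hv => ?_⟩
  · by_cases hj : j ∈ range (Fin.castLE hV)
    · obtain ⟨i, rfl⟩ := hj
      simp only [he.extend_apply]
      exact (b.orthonormal.1 i).le
    · simp [extend_apply' _ _ _ hj]
  · calc _ = ∑ i, inner 𝕜 (b i : E) v • (b i : E) :=
          (Fintype.sum_of_injective _ he _ _ (fun j hj => by simp [extend_apply' _ _ _ hj])
            fun i => by simp [he.extend_apply]).symm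
      _ = v := by simpa using congrArg Subtype.val (b.sum_repr' ⟨v, hv⟩)

theorem _root_.Matrix.exists_eq_trace_mul {n R : Type*} [Fintype n] [DecidableEq n]
    [CommSemiring R] (g : Module.Dual R (Matrix n n R)) :
    ∃ M : Matrix n n R, ∀ A, g A = trace (A * M) := by
  refine ⟨of fun j i => g (single i j 1), fun A => ?_⟩
  conv_lhs => rw [matrix_eq_sum_single A]
  simp only [map_sum, trace, diag, mul_apply, of_apply]
  refine Finset.sum_congr rfl fun i _ => Finset.sum_congr rfl fun j _ => ?_
  rw [← smul_eq_mul, ← map_smul, smul_single, smul_eq_mul, mul_one]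

theorem _root_.Matrix.re_trace_mul_conjTranspose {n : Type*} [Fintype n] {A : Matrix n n ℂ}
    (hA : A.IsHermitian) (M : Matrix n n ℂ) : (trace (A * Mᴴ)).re = (trace (A * M)).re := by
  rw [← hA.eq, ← conjTranspose_mul, trace_conjTranspose, trace_mul_comm, hA.eq]
  exact Complex.conj_re _

theorem _root_.Matrix.exists_isHermitian_eq_re_trace_mul {n : Type*} [Fintype n] [DecidableEq n]
    (f : Module.Dual ℝ (Matrix n n ℂ)) :
    ∃ L : Matrix n n ℂ, L.IsHermitian ∧ ∀ A, A.IsHermitian → f A = (trace (A * L)).re := by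
  obtain ⟨M, hM⟩ := exists_eq_trace_mul (f.extendRCLike (𝕜 := ℂ))
  refine ⟨(2⁻¹ : ℝ) • (M + Mᴴ), (isHermitian_add_transpose_self M).smul (by simp), fun A hA => ?_⟩
  rw [mul_smul_comm, mul_add, trace_smul, trace_add, Complex.smul_re, Complex.add_re,
    re_trace_mul_conjTranspose hA, ← hM, smul_eq_mul]
  have := Module.Dual.re_extendRCLike_apply (𝕜 := ℂ) f A
  simp only [RCLike.re_to_complex] at this
  linarith

variable {dA dB r : ℕ}

theorem isUnitVec_iff_norm_eq_one {ψ : Fin dA × Fin dB → ℂ} :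
    IsUnitVec ψ ↔ ‖WithLp.toLp 2 ψ‖ = 1 := by
  have h : star ψ ⬝ᵥ ψ = inner ℂ (WithLp.toLp 2 ψ) (WithLp.toLp 2 ψ) := by
    rw [EuclideanSpace.inner_eq_star_dotProduct, dotProduct_comm]
  rw [IsUnitVec, h, inner_self_eq_norm_sq_to_K, ← RCLike.ofReal_pow, ← RCLike.ofReal_one (K := ℂ),
    RCLike.ofReal_inj, pow_eq_one_iff_of_nonneg (norm_nonneg _) two_ne_zero]

theorem norm_toLp_column_le (ψ : Fin dA × Fin dB → ℂ) (b : Fin dB) :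
    ‖WithLp.toLp 2 fun a => ψ (a, b)‖ ≤ ‖WithLp.toLp 2 ψ‖ := by
  simp only [EuclideanSpace.norm_eq, Fintype.sum_prod_type]
  gcongr with a
  exact Finset.single_le_sum (f := fun b => ‖ψ (a, b)‖ ^ 2) (fun _ _ => by positivity)
    (Finset.mem_univ b)

def sumTensor (xy : (Fin r → Fin dA → ℂ) × (Fin r → Fin dB → ℂ)) : Fin dA × Fin dB → ℂ :=
  ∑ k, tensorVec (xy.1 k) (xy.2 k)

theorem continuous_sumTensor : Continuous (sumTensor (dA := dA) (dB := dB) (r := r)) := by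
  unfold sumTensor tensorVec
  fun_prop

theorem exists_norm_le_one_sumTensor_eq {ψ : Fin dA × Fin dB → ℂ} (hψ : IsUnitVec ψ)
    (hs : SchmidtRankLE r ψ) :
    ∃ xy : (Fin r → Fin dA → ℂ) × (Fin r → Fin dB → ℂ), ‖xy‖ ≤ 1 ∧ sumTensor xy = ψ := by
  obtain ⟨x, y, hxy⟩ := hs
  let col (b : Fin dB) : EuclideanSpace ℂ (Fin dA) := WithLp.toLp 2 fun a => ψ (a, b)
  let V := Submodule.span ℂ (range fun k => WithLp.toLp 2 (x k))
  have hcol (b : Fin dB) : col b ∈ V := by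
    have : col b = ∑ k, y k b • WithLp.toLp 2 (x k) := by
      ext a
      simp [col, hxy, tensorVec, mul_comm]
    rw [this]
    exact Submodule.sum_mem _ fun k _ => Submodule.smul_mem _ _ (Submodule.subset_span ⟨k, rfl⟩)
  obtain ⟨u, hu, hV⟩ := V.exists_norm_le_one_sum_inner_smul_eq
    ((finrank_range_le_card _).trans (Fintype.card_fin r).le)
  refine ⟨(fun j => (u j).ofLp, fun j b => inner ℂ (u j) (col b)), ?_, ?_⟩
  · have hcol_norm (b : Fin dB) : ‖col b‖ ≤ 1 :=
      (norm_toLp_column_le ψ b).trans (isUnitVec_iff_norm_eq_one.1 hψ).le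
    refine norm_prod_le_iff.2 ⟨?_, ?_⟩ <;> refine (pi_norm_le_iff_of_nonneg zero_le_one).2
      fun j => (pi_norm_le_iff_of_nonneg zero_le_one).2 fun a => ?_
    · exact (PiLp.norm_apply_le _ _).trans (hu j)
    · exact (norm_inner_le_norm _ _).trans (mul_le_one₀ (hu j) (norm_nonneg _) (hcol_norm a))
  · ext ⟨a, b⟩
    simpa [col, sumTensor, tensorVec, mul_comm] using congrArg (·.ofLp a) (hV _ (hcol b))

def unitSchmidtRankLE (dA dB r : ℕ) : Set (Fin dA × Fin dB → ℂ) :=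
  {ψ | IsUnitVec ψ ∧ SchmidtRankLE r ψ}

theorem isCompact_unitSchmidtRankLE : IsCompact (unitSchmidtRankLE dA dB r) := by
  have hclosed : IsClosed {ψ : Fin dA × Fin dB → ℂ | IsUnitVec ψ} := by
    simp_rw [isUnitVec_iff_norm_eq_one]
    exact isClosed_eq (by fun_prop) continuous_const
  have : unitSchmidtRankLE dA dB r = sumTensor (r := r) '' closedBall 0 1 ∩ {ψ | IsUnitVec ψ} := by
    ext ψ
    constructor
    · rintro ⟨hψ, hs⟩
      obtain ⟨xy, hxy, rfl⟩ := exists_norm_le_one_sumTensor_eq hψ hs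
      exact ⟨⟨xy, mem_closedBall_zero_iff.2 hxy, rfl⟩, hψ⟩
    · rintro ⟨⟨xy, -, rfl⟩, hψ⟩
      exact ⟨hψ, xy.1, xy.2, rfl⟩
  rw [this]
  exact ((isCompact_closedBall 0 1).image continuous_sumTensor).inter_right hclosed

theorem unitSchmidtRankLE_nonempty (hA : 1 ≤ dA) (hB : 1 ≤ dB) (hr : 1 ≤ r) :
    (unitSchmidtRankLE dA dB r).Nonempty := by
  refine ⟨Pi.single (⟨0, hA⟩, ⟨0, hB⟩) 1, by simp [IsUnitVec],
    Pi.single ⟨0, hr⟩ (Pi.single ⟨0, hA⟩ 1), Pi.single ⟨0, hr⟩ (Pi.single ⟨0, hB⟩ 1), ?_⟩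
  rw [Fintype.sum_eq_single ⟨0, hr⟩ fun k hk => by ext; simp [hk, tensorVec]]
  ext ⟨a, b⟩
  simp only [tensorVec, Pi.single_apply, Prod.mk.injEq, ite_true, ite_zero_mul_ite_zero, mul_one]

theorem fr_eq_sSup_image (L : Matrix (Fin dA × Fin dB) (Fin dA × Fin dB) ℂ) :
    fr r L = sSup ((fun ψ => (expVal L ψ).re) '' unitSchmidtRankLE dA dB r) := by
  simp only [fr, unitSchmidtRankLE, Set.image, mem_ofPred_eq, and_assoc]

theorem trace_projOp_mul (ψ : Fin dA × Fin dB → ℂ)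
    (L : Matrix (Fin dA × Fin dB) (Fin dA × Fin dB) ℂ) : trace (projOp ψ * L) = expVal L ψ := by
  rw [projOp, vecMulVec_mul, trace_vecMulVec, expVal, dotProduct_mulVec, dotProduct_comm]

theorem SNle_eq_convexHull : SNle dA dB r = convexHull ℝ (projOp '' unitSchmidtRankLE dA dB r) := by
  ext σ
  constructor
  · rintro ⟨N, p, ψ, hp₀, hp₁, hψ, hs, rfl⟩
    simp_rw [Complex.coe_smul]
    exact (convex_convexHull ℝ _).sum_mem (fun i _ => hp₀ i) hp₁
      fun i _ => subset_convexHull ℝ _ ⟨ψ i, ⟨hψ i, hs i⟩, rfl⟩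
  · intro hσ
    obtain ⟨ι, _, p, σ', hp₀, hp₁, hσ', rfl⟩ := mem_convexHull_iff_exists_fintype.1 hσ
    choose ψ hψ hψσ using hσ'
    let e := (Fintype.equivFin ι).symm
    refine ⟨Fintype.card ι, p ∘ e, ψ ∘ e, fun i => hp₀ _, by rw [← hp₁, ← e.sum_comp]; rfl,
      fun i => (hψ _).1, fun i => (hψ _).2, ?_⟩
    simp_rw [← e.sum_comp (fun i => p i • σ' i), Complex.coe_smul, Function.comp_apply, hψσ]

theorem isCompact_SNle : IsCompact (SNle dA dB r) :=
  SNle_eq_convexHull ▸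
    isCompact_convexHull (isCompact_unitSchmidtRankLE.image (by unfold projOp; fun_prop))

theorem convex_SNle : Convex ℝ (SNle dA dB r) :=
  SNle_eq_convexHull ▸ convex_convexHull ℝ _

theorem re_trace_mul_le_fr {σ : Matrix (Fin dA × Fin dB) (Fin dA × Fin dB) ℂ}
    (hσ : σ ∈ SNle dA dB r) (L : Matrix (Fin dA × Fin dB) (Fin dA × Fin dB) ℂ) :
    (trace (σ * L)).re ≤ fr r L := by
  have hlin : IsLinearMap ℝ fun A : Matrix (Fin dA × Fin dB) (Fin dA × Fin dB) ℂ =>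
      (trace (A * L)).re :=
    ⟨fun A B => by simp [add_mul], fun c A => by simp⟩
  rw [SNle_eq_convexHull] at hσ
  refine convexHull_min ?_ (convex_halfSpace_le hlin (fr r L)) hσ
  rintro _ ⟨ψ, hψ, rfl⟩
  rw [mem_ofPred_eq, trace_projOp_mul, fr_eq_sSup_image]
  refine le_csSup (isCompact_unitSchmidtRankLE.image ?_).bddAbove (mem_image_of_mem _ hψ)
  unfold expVal
  fun_prop

theorem schmidt_number_condition_general (dA dB r : ℕ) (hA : 1 ≤ dA) (hB : 1 ≤ dB)
    (hr : 1 ≤ r)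
    (ρ : Matrix (Fin dA × Fin dB) (Fin dA × Fin dB) ℂ)
    (hρ : ρ.PosSemidef) :
    ρ ∉ SNle dA dB r ↔
      ∃ L : Matrix (Fin dA × Fin dB) (Fin dA × Fin dB) ℂ,
        L.IsHermitian ∧ fr r L < (Matrix.trace (ρ * L)).re := by
  constructor
  · intro hρS
    obtain ⟨f, u, hfS, hfρ⟩ :=
      geometric_hahn_banach_closed_point convex_SNle isCompact_SNle.isClosed hρS
    obtain ⟨L, hL, hfL⟩ := exists_isHermitian_eq_re_trace_mul f.toLinearMap
    refine ⟨L, hL, ?_⟩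
    calc fr r L ≤ u := by
          rw [fr_eq_sSup_image]
          refine csSup_le ((unitSchmidtRankLE_nonempty hA hB hr).image _) ?_
          rintro _ ⟨ψ, hψ, rfl⟩
          have hψS : projOp ψ ∈ SNle dA dB r :=
            SNle_eq_convexHull ▸ subset_convexHull ℝ _ (mem_image_of_mem _ hψ)
          dsimp only
          rw [← trace_projOp_mul, ← hfL (projOp ψ) (posSemidef_vecMulVec_self_star ψ).isHermitian]
          exact (hfS _ hψS).le
      _ < (trace (ρ * L)).re := hfL ρ hρ.1 ▸ hfρ
  · rintro ⟨L, -, hL⟩ hρS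
    exact (re_trace_mul_le_fr hρS L).not_gt hL

/-- a density operator ρ has Schmidt number greater than r if and only if
there exists a Hermitian operator L with Tr(ρ L) > f_r(L). -/
theorem schmidt_number_condition (dA dB r : ℕ) (hA : 1 ≤ dA) (hB : 1 ≤ dB)
    (hr : 1 ≤ r) (hrd : r ≤ min dA dB)
    (ρ : Matrix (Fin dA × Fin dB) (Fin dA × Fin dB) ℂ)
    (hρ : ρ.PosSemidef) (htr : ρ.trace = 1) :
    ρ ∉ SNle dA dB r ↔
      ∃ L : Matrix (Fin dA × Fin dB) (Fin dA × Fin dB) ℂ,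
        L.IsHermitian ∧ fr r L < (Matrix.trace (ρ * L)).re :=
  schmidt_number_condition_general dA dB r hA hB hr ρ hρ

end SNpaper
end
end

section
/- (First-order optimality: the r-Schmidt eigenvalue equations at a maximizer.) Let L be a Hermitian operator on H, 1 ≤ r ≤ min(d_A, d_B), and suppose the unit vector ψ = Σ_{k=1}^r λ_k e_k ⊗ f_k, with λ_k > 0, (e_k)_{k=1}^r orthonormal in ℂ^{d_A} and (f_k)_{k=1}^r orthonormal in ℂ^{d_B}, attains the maximum f_r(L), and set g := ⟨ψ, L ψ⟩ = f_r(L). Then for all 1 ≤ k, k' ≤ r one has ⟨e_k ⊗ f_{k'}, L ψ⟩ = g λ_k δ_{k,k'}; equivalently, the vector χ := L ψ − g ψ is orthogonal to e_k ⊗ f_{k'} for all 1 ≤ k, k' ≤ r. -/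
open scoped ComplexOrder

noncomputable section

namespace SNpaper

/-!
Adding `t • (e k ⊗ f k')` to `ψ` only changes the `k`-th Schmidt vector on the `B` side, so
`ψ + t • (e k ⊗ f k')` has Schmidt rank at most `r` for every `t : ℂ`. Hence the Hermitian form
`u ↦ ⟨u, (L - g) u⟩` with `g = f_r(L)`, which is `≤ 0` on all vectors of Schmidt rank at most `r`
and vanishes at `ψ`, attains its maximum at `t = 0` along this complex line, so its first
variation `⟨e k ⊗ f k', (L - g) ψ⟩` vanishes. Orthonormality gives
`⟨e k ⊗ f k', ψ⟩ = lam k δ_{k k'}`.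
-/

open ComplexConjugate RCLike WithLp Matrix

theorem _root_.LinearMap.IsSymmetric.inner_eq_zero_of_re_inner_le_zero {𝕜 E : Type*} [RCLike 𝕜]
    [NormedAddCommGroup E] [InnerProductSpace 𝕜 E] {T : E →ₗ[𝕜] E} (hT : T.IsSymmetric)
    {ψ ϕ : E} (hψ : re (inner 𝕜 ψ (T ψ)) = 0)
    (hle : ∀ t : 𝕜, re (inner 𝕜 (ψ + t • ϕ) (T (ψ + t • ϕ))) ≤ 0) :
    inner 𝕜 ϕ (T ψ) = 0 := by
  set a := inner 𝕜 ϕ (T ψ)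
  set b := re (inner 𝕜 ϕ (T ϕ))
  -- Along `t = s * a` the form is the real quadratic `2 ‖a‖² s + ‖a‖² b s²`, which stays `≤ 0`
  -- for all real `s` only if `a = 0`.
  have expand (s : ℝ) : re (inner 𝕜 (ψ + ((s : 𝕜) * a) • ϕ) (T (ψ + ((s : 𝕜) * a) • ϕ)))
      = 2 * ‖a‖ ^ 2 * s + ‖a‖ ^ 2 * b * (s * s) := by
    have hsym : inner 𝕜 ψ (T ϕ) = conj a := by rw [← hT, inner_conj_symm]
    have : inner 𝕜 (ψ + ((s : 𝕜) * a) • ϕ) (T (ψ + ((s : 𝕜) * a) • ϕ))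
        = inner 𝕜 ψ (T ψ) + (2 * ‖a‖ ^ 2 * s : ℝ) + (‖a‖ ^ 2 * (s * s) : ℝ) * inner 𝕜 ϕ (T ϕ) := by
      simp only [map_add, map_smul, inner_add_left, inner_add_right, inner_smul_left,
        inner_smul_right, hsym, map_mul, conj_ofReal]
      push_cast
      rw [← mul_conj a]
      ring
    rw [this, map_add, map_add, hψ, re_ofReal_mul, ofReal_re]
    ring
  have hdisc := discrim_le_zero (a := -(‖a‖ ^ 2 * b)) (b := -(2 * ‖a‖ ^ 2)) (c := 0)
    fun s => by linarith [expand s, hle ((s : 𝕜) * a)]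
  rw [discrim] at hdisc
  have : ‖a‖ ^ 2 = 0 := by nlinarith [sq_nonneg (‖a‖ ^ 2), sq_nonneg ‖a‖]
  simpa using this

theorem _root_.LinearMap.IsSymmetric.inner_sub_smul_eq_zero_of_re_inner_le {𝕜 E : Type*}
    [RCLike 𝕜] [NormedAddCommGroup E] [InnerProductSpace 𝕜 E] {T : E →ₗ[𝕜] E}
    (hT : T.IsSymmetric) {ψ ϕ : E} {g : ℝ} (hψ : re (inner 𝕜 ψ (T ψ)) = g * ‖ψ‖ ^ 2)
    (hle : ∀ t : 𝕜, re (inner 𝕜 (ψ + t • ϕ) (T (ψ + t • ϕ))) ≤ g * ‖ψ + t • ϕ‖ ^ 2) :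
    inner 𝕜 ϕ (T ψ - (g : 𝕜) • ψ) = 0 := by
  let M : E →ₗ[𝕜] E := T - (g : 𝕜) • LinearMap.id
  have hM : M.IsSymmetric := hT.sub (LinearMap.IsSymmetric.id.smul (conj_ofReal g))
  have re_inner_M (u : E) : re (inner 𝕜 u (M u)) = re (inner 𝕜 u (T u)) - g * ‖u‖ ^ 2 := by
    simp [M, inner_sub_right, inner_smul_right, inner_self_eq_norm_sq_to_K]
  exact hM.inner_eq_zero_of_re_inner_le_zero (by rw [re_inner_M, hψ, sub_self])
    fun t => by rw [re_inner_M]; linarith [hle t]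

theorem star_dotProduct_eq_inner_toLp {𝕜 n : Type*} [RCLike 𝕜] [Fintype n] (x y : n → 𝕜) :
    star x ⬝ᵥ y = inner 𝕜 (toLp 2 x) (toLp 2 y) :=
  dotProduct_comm _ _

theorem re_star_dotProduct_self {𝕜 n : Type*} [RCLike 𝕜] [Fintype n] (x : n → 𝕜) :
    re (star x ⬝ᵥ x) = ‖toLp 2 x‖ ^ 2 := by
  rw [star_dotProduct_eq_inner_toLp, inner_self_eq_norm_sq]

theorem _root_.Matrix.IsHermitian.star_dotProduct_sub_smul_eq_zero {𝕜 n : Type*} [RCLike 𝕜]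
    [Fintype n] [DecidableEq n] {L : Matrix n n 𝕜} (hL : L.IsHermitian) {ψ ϕ : n → 𝕜} {g : ℝ}
    (hψ : re (star ψ ⬝ᵥ L *ᵥ ψ) = g * re (star ψ ⬝ᵥ ψ))
    (hle : ∀ t : 𝕜, re (star (ψ + t • ϕ) ⬝ᵥ L *ᵥ (ψ + t • ϕ))
      ≤ g * re (star (ψ + t • ϕ) ⬝ᵥ (ψ + t • ϕ))) :
    star ϕ ⬝ᵥ (L *ᵥ ψ - (g : 𝕜) • ψ) = 0 := by
  simp only [star_dotProduct_eq_inner_toLp, inner_self_eq_norm_sq] at hψ hle ⊢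
  exact (isSymmetric_toEuclideanLin_iff.mpr hL).inner_sub_smul_eq_zero_of_re_inner_le hψ hle

section

variable {dA dB : ℕ}

theorem star_tensorVec_dotProduct_tensorVec (x x' : Fin dA → ℂ) (y y' : Fin dB → ℂ) :
    star (tensorVec x y) ⬝ᵥ tensorVec x' y' = (star x ⬝ᵥ x') * (star y ⬝ᵥ y') := by
  simp only [dotProduct, tensorVec, Pi.star_apply, star_mul', Fintype.sum_prod_type,
    Finset.sum_mul_sum]
  exact Finset.sum_congr rfl fun _ _ => Finset.sum_congr rfl fun _ _ => by ring

theorem tensorVec_smul_right (x : Fin dA → ℂ) (c : ℂ) (y : Fin dB → ℂ) :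
    tensorVec x (c • y) = c • tensorVec x y :=
  funext fun _ => mul_left_comm _ _ _

theorem tensorVec_add_right (x : Fin dA → ℂ) (y y' : Fin dB → ℂ) :
    tensorVec x (y + y') = tensorVec x y + tensorVec x y' :=
  funext fun _ => mul_add _ _ _

theorem star_tensorVec_dotProduct_sum_smul_tensorVec {r : ℕ} {e : Fin r → Fin dA → ℂ}
    {f : Fin r → Fin dB → ℂ} (he : ONFam e) (hf : ONFam f) (c : Fin r → ℂ) (k k' : Fin r) :
    star (tensorVec (e k) (f k')) ⬝ᵥ ∑ j, c j • tensorVec (e j) (f j)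
      = if k = k' then c k else 0 := by
  simp only [dotProduct_sum, dotProduct_smul, star_tensorVec_dotProduct_tensorVec, he k, hf k',
    smul_eq_mul, mul_ite, mul_one, mul_zero, Finset.sum_ite_eq, Finset.mem_univ, if_true]
  rcases eq_or_ne k k' with rfl | h <;> simp [*]

theorem SchmidtRankLE.smul {r : ℕ} {ψ : Fin dA × Fin dB → ℂ} (h : SchmidtRankLE r ψ)
    (c : ℂ) : SchmidtRankLE r (c • ψ) := by
  obtain ⟨x, y, rfl⟩ := h
  exact ⟨x, c • y, by simp only [Finset.smul_sum, Pi.smul_apply, tensorVec_smul_right]⟩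

theorem schmidtRankLE_sum_smul_tensorVec_add_smul_tensorVec {r : ℕ} (c : Fin r → ℂ)
    (x : Fin r → Fin dA → ℂ) (y : Fin r → Fin dB → ℂ) (k : Fin r) (t : ℂ) (z : Fin dB → ℂ) :
    SchmidtRankLE r (∑ j, c j • tensorVec (x j) (y j) + t • tensorVec (x k) z) := by
  refine ⟨x, fun j => c j • y j + (Pi.single k (t • z) : Fin r → Fin dB → ℂ) j, ?_⟩
  simp only [tensorVec_add_right, tensorVec_smul_right, Finset.sum_add_distrib]
  congr 1
  rw [Fintype.sum_eq_single k fun j hj => by ext; simp [hj, tensorVec]]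
  simp [tensorVec_smul_right]

theorem isUnitVec_iff_norm_toLp (ψ : Fin dA × Fin dB → ℂ) :
    IsUnitVec ψ ↔ ‖toLp 2 ψ‖ = 1 := by
  rw [IsUnitVec, star_dotProduct_eq_inner_toLp, inner_self_eq_norm_sq_to_K, ← ofReal_pow,
    ← ofReal_one, ofReal_inj, pow_eq_one_iff_of_nonneg (norm_nonneg _) two_ne_zero]

theorem bddAbove_fr_set (r : ℕ) (L : Matrix (Fin dA × Fin dB) (Fin dA × Fin dB) ℂ) :
    BddAbove { t | ∃ ψ, IsUnitVec ψ ∧ SchmidtRankLE r ψ ∧ (expVal L ψ).re = t } := by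
  refine ⟨‖toEuclideanCLM (𝕜 := ℂ) L‖, ?_⟩
  rintro _ ⟨ψ, hψ, -, rfl⟩
  have hnorm : ‖toLp 2 ψ‖ = 1 := (isUnitVec_iff_norm_toLp ψ).mp hψ
  calc (expVal L ψ).re = re (inner ℂ (toLp 2 ψ) (toEuclideanCLM (𝕜 := ℂ) L (toLp 2 ψ))) :=
        congrArg Complex.re (dotProduct_comm _ _)
    _ ≤ ‖toLp 2 ψ‖ * ‖toEuclideanCLM (𝕜 := ℂ) L (toLp 2 ψ)‖ := re_inner_le_norm _ _
    _ ≤ ‖toLp 2 ψ‖ * (‖toEuclideanCLM (𝕜 := ℂ) L‖ * ‖toLp 2 ψ‖) :=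
        mul_le_mul_of_nonneg_left (ContinuousLinearMap.le_opNorm _ _) (norm_nonneg _)
    _ = ‖toEuclideanCLM (𝕜 := ℂ) L‖ := by rw [hnorm, one_mul, mul_one]

theorem expVal_ofReal_smul (L : Matrix (Fin dA × Fin dB) (Fin dA × Fin dB) ℂ)
    (a : ℝ) (ψ : Fin dA × Fin dB → ℂ) : expVal L ((a : ℂ) • ψ) = (a ^ 2 : ℝ) * expVal L ψ := by
  simp only [expVal, star_smul, mulVec_smul, smul_dotProduct, dotProduct_smul, smul_eq_mul,
    Complex.star_def, Complex.conj_ofReal]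
  push_cast
  ring

theorem re_expVal_le_fr_mul {r : ℕ} (L : Matrix (Fin dA × Fin dB) (Fin dA × Fin dB) ℂ)
    {u : Fin dA × Fin dB → ℂ} (hu : SchmidtRankLE r u) :
    (expVal L u).re ≤ fr r L * (star u ⬝ᵥ u).re := by
  rcases eq_or_ne u 0 with rfl | hu0
  · simp [expVal]
  have hn : 0 < ‖toLp 2 u‖ := norm_pos_iff.mpr (by simpa using hu0)
  have hv : IsUnitVec (((‖toLp 2 u‖⁻¹ : ℝ) : ℂ) • u) := by
    rw [isUnitVec_iff_norm_toLp, toLp_smul, Complex.ofReal_inv]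
    exact norm_smul_inv_norm (norm_pos_iff.mp hn)
  have hle : (expVal L (((‖toLp 2 u‖⁻¹ : ℝ) : ℂ) • u)).re ≤ fr r L :=
    le_csSup (bddAbove_fr_set r L) ⟨_, hv, hu.smul _, rfl⟩
  rw [expVal_ofReal_smul, Complex.re_ofReal_mul, inv_pow, inv_mul_le_iff₀ (by positivity)] at hle
  rwa [← RCLike.re_to_complex (x := star u ⬝ᵥ u), re_star_dotProduct_self, mul_comm]

end

theorem rSE_equations_at_maximizer_general (dA dB r : ℕ)
    (L : Matrix (Fin dA × Fin dB) (Fin dA × Fin dB) ℂ) (hL : L.IsHermitian)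
    (lam : Fin r → ℝ)
    (e : Fin r → Fin dA → ℂ) (f : Fin r → Fin dB → ℂ)
    (hONe : ONFam e) (hONf : ONFam f)
    (ψ : Fin dA × Fin dB → ℂ)
    (hψ : ψ = ∑ k, (lam k : ℂ) • tensorVec (e k) (f k))
    (hunit : IsUnitVec ψ)
    (hmax : (expVal L ψ).re = fr r L) :
    (∀ k k' : Fin r,
      dotProduct (star (tensorVec (e k) (f k'))) (L.mulVec ψ)
        = if k = k' then ((fr r L * lam k : ℝ) : ℂ) else 0) ∧
    (∀ k k' : Fin r,
      dotProduct (star (tensorVec (e k) (f k')))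
        (L.mulVec ψ - ((fr r L : ℝ) : ℂ) • ψ) = 0) := by
  have hψ_coeff (k k' : Fin r) :
      star (tensorVec (e k) (f k')) ⬝ᵥ ψ = if k = k' then (lam k : ℂ) else 0 := by
    rw [hψ]
    exact star_tensorVec_dotProduct_sum_smul_tensorVec hONe hONf _ k k'
  have horth (k k' : Fin r) :
      star (tensorVec (e k) (f k')) ⬝ᵥ (L *ᵥ ψ - ((fr r L : ℝ) : ℂ) • ψ) = 0 := by
    refine hL.star_dotProduct_sub_smul_eq_zero ?_ fun t => re_expVal_le_fr_mul L ?_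
    · rw [show star ψ ⬝ᵥ ψ = 1 from hunit, one_re, mul_one]
      exact hmax
    · rw [hψ]
      exact schmidtRankLE_sum_smul_tensorVec_add_smul_tensorVec _ e f k t (f k')
  refine ⟨fun k k' => ?_, horth⟩
  have h := horth k k'
  rw [dotProduct_sub, dotProduct_smul, hψ_coeff, sub_eq_zero] at h
  rw [h]
  split_ifs <;> simp

/-- first-order optimality (the r-Schmidt eigenvalue equations) at a maximizer:
if the unit vector ψ = Σ λ_k e_k ⊗ f_k (λ_k > 0, orthonormal families) attains f_r(L) with
g = ⟨ψ, L ψ⟩ = f_r(L), then ⟨e_k ⊗ f_k', L ψ⟩ = g λ_k δ_{k,k'}; equivalently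
χ = L ψ − g ψ is orthogonal to every e_k ⊗ f_k'. -/
theorem rSE_equations_at_maximizer (dA dB r : ℕ) (hA : 1 ≤ dA) (hB : 1 ≤ dB)
    (hr : 1 ≤ r) (hrd : r ≤ min dA dB)
    (L : Matrix (Fin dA × Fin dB) (Fin dA × Fin dB) ℂ) (hL : L.IsHermitian)
    (lam : Fin r → ℝ) (hlam : ∀ k, 0 < lam k)
    (e : Fin r → Fin dA → ℂ) (f : Fin r → Fin dB → ℂ)
    (hONe : ONFam e) (hONf : ONFam f)
    (ψ : Fin dA × Fin dB → ℂ)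
    (hψ : ψ = ∑ k, (lam k : ℂ) • tensorVec (e k) (f k))
    (hunit : IsUnitVec ψ)
    (hmax : (expVal L ψ).re = fr r L) :
    (∀ k k' : Fin r,
      dotProduct (star (tensorVec (e k) (f k'))) (L.mulVec ψ)
        = if k = k' then ((fr r L * lam k : ℝ) : ℂ) else 0) ∧
    (∀ k k' : Fin r,
      dotProduct (star (tensorVec (e k) (f k')))
        (L.mulVec ψ - ((fr r L : ℝ) : ℂ) • ψ) = 0) :=
  rSE_equations_at_maximizer_general dA dB r L hL lam e f hONe hONf ψ hψ hunit hmax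

end SNpaper
end
end

section
/- (Common Schmidt decomposition of an r-Schmidt eigenvector and its image.) Let L be a Hermitian operator on H, let ψ = Σ_{k=1}^r λ_k e_k ⊗ f_k be a unit vector with λ_k > 0, (e_k)_{k=1}^r orthonormal in ℂ^{d_A}, (f_k)_{k=1}^r orthonormal in ℂ^{d_B}, let g := ⟨ψ, L ψ⟩, and suppose L ψ = g ψ + χ where χ is bi-orthogonal, i.e., χ lies in the span of vectors a ⊗ b with a orthogonal to e_1, …, e_r and b orthogonal to f_1, …, f_r. Then, with d = min(d_A, d_B), there exist orthonormal families (e_k)_{k=1}^{d} in ℂ^{d_A} and (f_k)_{k=1}^{d} in ℂ^{d_B} extending the given ones, and real numbers μ_1, …, μ_d with μ_k = g λ_k for 1 ≤ k ≤ r and μ_k ≥ 0 for k > r, such that L ψ = Σ_{k=1}^{d} μ_k e_k ⊗ f_k; i.e., ψ and L ψ admit Schmidt decompositions with respect to the same orthonormal product bases. -/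
open scoped ComplexOrder

noncomputable section

open Matrix

namespace Matrix

theorem eq_sum_vecMulVec_mulVec {𝕜 : Type*} [RCLike 𝕜] {m n ι : Type*} [Fintype n] [Fintype ι]
    (M : Matrix m n 𝕜) (b : OrthonormalBasis ι 𝕜 (EuclideanSpace 𝕜 n)) :
    M = ∑ i, vecMulVec (M *ᵥ b i) (star (b i)) := by
  rw [ext_iff_mulVec]
  intro x
  have hx := congrArg WithLp.ofLp (b.sum_repr' (WithLp.toLp 2 x))
  simp only [EuclideanSpace.inner_eq_star_dotProduct, WithLp.ofLp_sum, WithLp.ofLp_smul] at hx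
  conv_lhs => rw [← hx]
  simp [sum_mulVec, mulVec_sum, vecMulVec_mulVec, mulVec_smul, dotProduct_comm]

theorem star_mulVec_dotProduct_mulVec {𝕜 : Type*} [RCLike 𝕜] {m n : Type*} [Fintype m]
    [Fintype n] (M : Matrix m n 𝕜) (x y : n → 𝕜) :
    star (M *ᵥ x) ⬝ᵥ (M *ᵥ y) = star x ⬝ᵥ ((Mᴴ * M) *ᵥ y) := by
  rw [star_mulVec, dotProduct_mulVec, vecMul_vecMul, ← dotProduct_mulVec]

theorem star_mulVec_eigenvectorBasis_dotProduct_mulVec {𝕜 : Type*} [RCLike 𝕜] {m n : Type*} [Fintype m]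
    [Fintype n] [DecidableEq n] (M : Matrix m n 𝕜) (hM : (Mᴴ * M).IsHermitian) (i j : n) :
    star (M *ᵥ hM.eigenvectorBasis i) ⬝ᵥ (M *ᵥ hM.eigenvectorBasis j) =
      if i = j then (hM.eigenvalues i : 𝕜) else 0 := by
  rw [star_mulVec_dotProduct_mulVec, hM.mulVec_eigenvectorBasis, dotProduct_smul,
    dotProduct_comm, ← EuclideanSpace.inner_eq_star_dotProduct,
    orthonormal_iff_ite.mp hM.eigenvectorBasis.orthonormal]
  split_ifs with h
  · subst h
    simp [RCLike.real_smul_eq_coe_mul]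
  · simp

end Matrix

namespace Fin

theorem sum_extend_castLE_smul {α : Type*} {n d : ℕ} (h : n ≤ d) (c : Fin n → ℝ)
    (T : Fin d → α → ℂ) :
    ∑ k, ((Function.extend (castLE h) c 0 k : ℝ) : ℂ) • T k = ∑ i, (c i : ℂ) • T (castLE h i) :=
  (Fintype.sum_of_injective _ (castLE_injective h) _ _
    (fun _ hk ↦ by simp [Function.extend_apply' _ _ _ hk])
    (fun _ ↦ by simp [(castLE_injective h).extend_apply])).symm

theorem extend_castLE_append_nonneg {r m d : ℕ} (h : r + m ≤ d) (a : Fin r → ℝ)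
    {s : Fin m → ℝ} (hs : ∀ j, 0 ≤ s j) {k : Fin d} (hk : r ≤ (k : ℕ)) :
    0 ≤ Function.extend (castLE h) (append a s) 0 k := by
  by_cases hk' : ∃ i, castLE h i = k
  · obtain ⟨i, rfl⟩ := hk'
    rw [(castLE_injective h).extend_apply]
    induction i using addCases with
    | left i => exact absurd hk (by simp)
    | right j => simpa using hs j
  · simp [Function.extend_apply' _ _ _ hk']

end Fin

namespace SNpaper

section ONFam

variable {n m k : ℕ}

theorem onFam_iff_orthonormal (e : Fin m → Fin n → ℂ) :
    ONFam e ↔ Orthonormal ℂ (fun i ↦ WithLp.toLp 2 (e i) : Fin m → EuclideanSpace ℂ (Fin n)) := by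
  simp only [ONFam, orthonormal_iff_ite, EuclideanSpace.inner_toLp_toLp, dotProduct_comm _ (star _)]

theorem ONFam.card_le {e : Fin m → Fin n → ℂ} (he : ONFam e) : m ≤ n := by
  simpa using ((onFam_iff_orthonormal e).mp he).linearIndependent.fintype_card_le_finrank

theorem ONFam.star_dotProduct_sum {v : Fin m → Fin n → ℂ} (hv : ONFam v) (c : Fin m → ℂ)
    (l : Fin m) : star (v l) ⬝ᵥ ∑ j, c j • v j = c l := by
  simp [dotProduct_sum, hv l]

theorem ONFam.append {u : Fin m → Fin n → ℂ} {v : Fin k → Fin n → ℂ} (hu : ONFam u)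
    (hv : ONFam v) (huv : ∀ i j, star (u i) ⬝ᵥ v j = 0) : ONFam (Fin.append u v) := by
  have hvu : ∀ i j, star (v j) ⬝ᵥ u i = 0 := fun i j ↦ by
    rw [dotProduct_comm, dotProduct_star, dotProduct_comm, huv, star_zero]
  rw [ONFam] at hu hv
  intro a b
  refine Fin.addCases (fun i ↦ ?_) (fun i ↦ ?_) a <;>
    refine Fin.addCases (fun j ↦ ?_) (fun j ↦ ?_) b <;>
    simp [hu, hv, huv, hvu, Fin.ext_iff] <;> omega

theorem ONFam.extend {a : Fin k → Fin n → ℂ} (ha : ONFam a) {d : ℕ} (hkd : k ≤ d) (hdn : d ≤ n) :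
    ∃ a' : Fin d → Fin n → ℂ, ONFam a' ∧ ∀ i, a' (Fin.castLE hkd i) = a i := by
  let v : Fin n → EuclideanSpace ℂ (Fin n) :=
    fun i ↦ WithLp.toLp 2 (if h : (i : ℕ) < k then a ⟨i, h⟩ else 0)
  have hv : Orthonormal ℂ ({i : Fin n | (i : ℕ) < k}.domRestrict v) := by
    rw [orthonormal_iff_ite]
    rintro ⟨i, hi⟩ ⟨j, hj⟩
    simp only [Set.mem_ofPred_eq] at hi hj
    simp [v, hi, hj, EuclideanSpace.inner_toLp_toLp, dotProduct_comm _ (star _), ha _ _,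
      Fin.ext_iff]
  obtain ⟨b, hb⟩ := hv.exists_orthonormalBasis_extension_of_card_eq (by simp)
  refine ⟨fun i ↦ b (Fin.castLE hdn i), ?_, fun i ↦ ?_⟩
  · rw [onFam_iff_orthonormal]
    exact b.orthonormal.comp _ (Fin.castLE_injective hdn)
  · dsimp only
    rw [Fin.castLE_castLE, hb _ (by simp)]
    simp [v]

end ONFam

theorem exists_svd {p q : ℕ} (M : Matrix (Fin p) (Fin q) ℂ) :
    ∃ (m : ℕ) (s : Fin m → ℝ) (u : Fin m → Fin p → ℂ) (v : Fin m → Fin q → ℂ),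
      (∀ j, 0 < s j) ∧ ONFam u ∧ ONFam v ∧ M = ∑ j, (s j : ℂ) • vecMulVec (u j) (v j) := by
  have hN := posSemidef_conjTranspose_mul_self M
  have gram := star_mulVec_eigenvectorBasis_dotProduct_mulVec M hN.isHermitian
  set w := hN.isHermitian.eigenvectorBasis
  set t := hN.isHermitian.eigenvalues
  have hw : ONFam fun i ↦ (w i : Fin q → ℂ) := (onFam_iff_orthonormal _).mpr w.orthonormal
  have hker : ∀ i, t i = 0 → M *ᵥ w i = 0 := fun i hi ↦
    dotProduct_star_self_eq_zero.mp (by simp [gram, t, hi])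
  let σ := (Fintype.equivFin {i // t i ≠ 0}).symm
  let s : Fin _ → ℝ := fun j ↦ √(t (σ j))
  have hs : ∀ j, 0 < s j := fun j ↦ Real.sqrt_pos.mpr ((hN.eigenvalues_nonneg _).lt_of_ne' (σ j).2)
  have hs0 : ∀ j, (s j : ℂ) ≠ 0 := fun j ↦ by exact_mod_cast (hs j).ne'
  refine ⟨_, s, fun j ↦ (s j : ℂ)⁻¹ • M *ᵥ w (σ j), fun j ↦ star (w (σ j)), hs, ?_, ?_, ?_⟩
  · intro i j
    have hσ : (σ i : Fin q) = σ j ↔ i = j := by simp [Subtype.val_inj]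
    simp only [star_smul, smul_dotProduct, dotProduct_smul, gram, hσ]
    split_ifs with h
    · subst h
      have hsq : (t (σ i) : ℂ) = s i ^ 2 := by
        exact_mod_cast (Real.sq_sqrt (hN.eigenvalues_nonneg _)).symm
      simp only [RCLike.star_def, map_inv₀, Complex.conj_ofReal, smul_eq_mul]
      field_simp [hs0 i]
      exact hsq
    · simp
  · intro i j
    simp [dotProduct_comm _ (star _), hw _ _, Subtype.val_inj, eq_comm]
  · conv_lhs => rw [eq_sum_vecMulVec_mulVec M w]
    refine (Fintype.sum_of_injective (Subtype.val ∘ σ) (Subtype.val_injective.comp σ.injective)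
      _ _ (fun i hi ↦ ?_) (fun j ↦ ?_)).symm
    · have hti : t i = 0 := not_not.mp fun h ↦ hi ⟨σ.symm ⟨i, h⟩, by simp⟩
      simp [hker i hti]
    · simp [smul_vecMulVec, smul_smul, hs0]

theorem of_curry_tensorVec {p q : ℕ} (a : Fin p → ℂ) (b : Fin q → ℂ) :
    Matrix.of (Function.curry (tensorVec a b)) = vecMulVec a b := rfl

theorem vecMul_of_curry_eq_zero_of_mem_span {p q : ℕ} {x : Fin p → ℂ} {χ : Fin p × Fin q → ℂ}
    (hχ : χ ∈ Submodule.span ℂ {w | ∃ a b, x ⬝ᵥ a = 0 ∧ w = tensorVec a b}) :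
    x ᵥ* Matrix.of (Function.curry χ) = 0 := by
  induction hχ using Submodule.span_induction with
  | mem w hw =>
    obtain ⟨a, b, ha, rfl⟩ := hw
    rw [of_curry_tensorVec, vecMul_vecMulVec, ha, zero_smul]
  | zero => exact vecMul_zero x
  | add w w' _ _ hw hw' =>
    change x ᵥ* (of (Function.curry w) + of (Function.curry w')) = 0
    rw [vecMul_add, hw, hw', add_zero]
  | smul c w _ hw =>
    change x ᵥ* (c • of (Function.curry w)) = 0
    rw [vecMul_smul, hw, smul_zero]

theorem of_curry_mulVec_eq_zero_of_mem_span {p q : ℕ} {y : Fin q → ℂ} {χ : Fin p × Fin q → ℂ}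
    (hχ : χ ∈ Submodule.span ℂ {w | ∃ a b, b ⬝ᵥ y = 0 ∧ w = tensorVec a b}) :
    Matrix.of (Function.curry χ) *ᵥ y = 0 := by
  induction hχ using Submodule.span_induction with
  | mem w hw =>
    obtain ⟨a, b, hb, rfl⟩ := hw
    rw [of_curry_tensorVec, vecMulVec_mulVec, hb, MulOpposite.op_zero, zero_smul]
  | zero => exact zero_mulVec y
  | add w w' _ _ hw hw' =>
    change (of (Function.curry w) + of (Function.curry w')) *ᵥ y = 0
    rw [add_mulVec, hw, hw', add_zero]
  | smul c w _ hw =>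
    change (c • of (Function.curry w)) *ᵥ y = 0
    rw [smul_mulVec, hw, smul_zero]

structure IsSchmidtDecomposition {p q m : ℕ} (χ : Fin p × Fin q → ℂ) (s : Fin m → ℝ)
    (u : Fin m → Fin p → ℂ) (v : Fin m → Fin q → ℂ) : Prop where
  pos : ∀ j, 0 < s j
  onFam_left : ONFam u
  onFam_right : ONFam v
  eq_sum : χ = ∑ j, (s j : ℂ) • tensorVec (u j) (v j)

theorem exists_isSchmidtDecomposition {p q : ℕ} (χ : Fin p × Fin q → ℂ) :
    ∃ (m : ℕ) (s : Fin m → ℝ) (u : Fin m → Fin p → ℂ) (v : Fin m → Fin q → ℂ),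
      IsSchmidtDecomposition χ s u v := by
  obtain ⟨m, s, u, v, hs, hu, hv, hM⟩ := exists_svd (Matrix.of (Function.curry χ))
  refine ⟨m, s, u, v, hs, hu, hv, ?_⟩
  ext ⟨i, l⟩
  simpa [tensorVec, Finset.sum_apply, Matrix.sum_apply, vecMulVec_apply] using congrFun₂ hM i l

namespace IsSchmidtDecomposition

variable {p q m : ℕ} {χ : Fin p × Fin q → ℂ} {s : Fin m → ℝ} {u : Fin m → Fin p → ℂ}
  {v : Fin m → Fin q → ℂ}

theorem of_curry_eq (h : IsSchmidtDecomposition χ s u v) :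
    Matrix.of (Function.curry χ) = ∑ j, (s j : ℂ) • vecMulVec (u j) (v j) := by
  ext i l
  simp [h.eq_sum, tensorVec, Finset.sum_apply, Matrix.sum_apply, vecMulVec_apply]

theorem dotProduct_left_eq_zero (h : IsSchmidtDecomposition χ s u v) {x : Fin p → ℂ}
    (hx : χ ∈ Submodule.span ℂ {w | ∃ a b, x ⬝ᵥ a = 0 ∧ w = tensorVec a b}) (j : Fin m) :
    x ⬝ᵥ u j = 0 := by
  have h0 := vecMul_of_curry_eq_zero_of_mem_span hx
  rw [h.of_curry_eq, vecMul_sum] at h0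
  simp only [vecMul_smul, vecMul_vecMulVec, smul_smul] at h0
  have hj := h.onFam_right.star_dotProduct_sum (fun j ↦ (s j : ℂ) * (x ⬝ᵥ u j)) j
  rw [h0, dotProduct_zero] at hj
  exact (mul_eq_zero.mp hj.symm).resolve_left (by exact_mod_cast (h.pos j).ne')

theorem dotProduct_right_eq_zero (h : IsSchmidtDecomposition χ s u v) {y : Fin q → ℂ}
    (hy : χ ∈ Submodule.span ℂ {w | ∃ a b, y ⬝ᵥ b = 0 ∧ w = tensorVec a b}) (j : Fin m) :
    y ⬝ᵥ v j = 0 := by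
  have h0 := of_curry_mulVec_eq_zero_of_mem_span (y := y) (by simpa [dotProduct_comm y] using hy)
  rw [h.of_curry_eq, sum_mulVec] at h0
  simp only [smul_mulVec, vecMulVec_mulVec, op_smul_eq_smul, smul_smul] at h0
  have hj := h.onFam_left.star_dotProduct_sum (fun j ↦ (s j : ℂ) * (v j ⬝ᵥ y)) j
  rw [h0, dotProduct_zero] at hj
  rw [dotProduct_comm]
  exact (mul_eq_zero.mp hj.symm).resolve_left (by exact_mod_cast (h.pos j).ne')

end IsSchmidtDecomposition

theorem common_schmidt_decomposition_general (dA dB r : ℕ) (hrd : r ≤ min dA dB)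
    (L : Matrix (Fin dA × Fin dB) (Fin dA × Fin dB) ℂ)
    (lam : Fin r → ℝ)
    (e : Fin r → Fin dA → ℂ) (f : Fin r → Fin dB → ℂ)
    (hONe : ONFam e) (hONf : ONFam f)
    (ψ : Fin dA × Fin dB → ℂ)
    (hψ : ψ = ∑ k, (lam k : ℂ) • tensorVec (e k) (f k))
    (g : ℝ)
    (χ : Fin dA × Fin dB → ℂ)
    (hbi : χ ∈ Submodule.span ℂ
      { v | ∃ (a : Fin dA → ℂ) (b : Fin dB → ℂ),
        (∀ k, dotProduct (star (e k)) a = 0) ∧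
        (∀ k, dotProduct (star (f k)) b = 0) ∧ v = tensorVec a b })
    (hLψ : L.mulVec ψ = ((g : ℂ) • ψ) + χ) :
    ∃ (e' : Fin (min dA dB) → Fin dA → ℂ) (f' : Fin (min dA dB) → Fin dB → ℂ)
      (μ : Fin (min dA dB) → ℝ),
      ONFam e' ∧ ONFam f' ∧
      (∀ k : Fin r, e' (Fin.castLE hrd k) = e k) ∧
      (∀ k : Fin r, f' (Fin.castLE hrd k) = f k) ∧
      (∀ k : Fin r, μ (Fin.castLE hrd k) = g * lam k) ∧
      (∀ k : Fin (min dA dB), r ≤ (k : ℕ) → 0 ≤ μ k) ∧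
      L.mulVec ψ = ∑ k, (μ k : ℂ) • tensorVec (e' k) (f' k) := by
  obtain ⟨m, s, u, v, hχ⟩ := exists_isSchmidtDecomposition χ
  have heu : ∀ k j, star (e k) ⬝ᵥ u j = 0 := fun k ↦ hχ.dotProduct_left_eq_zero <|
    Submodule.span_mono (by rintro _ ⟨a, b, ha, -, rfl⟩; exact ⟨a, b, ha k, rfl⟩) hbi
  have hfv : ∀ k j, star (f k) ⬝ᵥ v j = 0 := fun k ↦ hχ.dotProduct_right_eq_zero <|
    Submodule.span_mono (by rintro _ ⟨a, b, -, hb, rfl⟩; exact ⟨a, b, hb k, rfl⟩) hbi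
  have hEU := hONe.append hχ.onFam_left heu
  have hFV := hONf.append hχ.onFam_right hfv
  have hrm : r + m ≤ min dA dB := le_min hEU.card_le hFV.card_le
  obtain ⟨e', he', hee'⟩ := hEU.extend hrm (min_le_left _ _)
  obtain ⟨f', hf', hff'⟩ := hFV.extend hrm (min_le_right _ _)
  have hcast : ∀ k : Fin r, Fin.castLE hrd k = Fin.castLE hrm (Fin.castAdd m k) := fun _ ↦ rfl
  refine ⟨e', f', Function.extend (Fin.castLE hrm) (Fin.append (fun k ↦ g * lam k) s) 0,
    he', hf', fun k ↦ ?_, fun k ↦ ?_, fun k ↦ ?_,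
    fun k ↦ Fin.extend_castLE_append_nonneg hrm _ fun j ↦ (hχ.pos j).le, ?_⟩
  · simp [hcast, hee']
  · simp [hcast, hff']
  · simp [hcast, (Fin.castLE_injective hrm).extend_apply]
  · rw [hLψ, hψ, hχ.eq_sum, Fin.sum_extend_castLE_smul]
    simp [hee', hff', Fin.sum_univ_add, Finset.smul_sum, smul_smul]

/-- common Schmidt decomposition of an r-Schmidt eigenvector ψ and its image L ψ:
if L ψ = g ψ + χ with χ bi-orthogonal to the Schmidt vectors of ψ, then the orthonormal
families of ψ extend to full orthonormal families of size d = min(d_A,d_B) giving a Schmidt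
decomposition L ψ = Σ_{k=1}^d μ_k e'_k ⊗ f'_k with μ_k = g λ_k for k ≤ r and μ_k ≥ 0 for k > r. -/
theorem common_schmidt_decomposition (dA dB r : ℕ) (hA : 1 ≤ dA) (hB : 1 ≤ dB)
    (hr : 1 ≤ r) (hrd : r ≤ min dA dB)
    (L : Matrix (Fin dA × Fin dB) (Fin dA × Fin dB) ℂ) (hL : L.IsHermitian)
    (lam : Fin r → ℝ) (hlam : ∀ k, 0 < lam k)
    (e : Fin r → Fin dA → ℂ) (f : Fin r → Fin dB → ℂ)
    (hONe : ONFam e) (hONf : ONFam f)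
    (ψ : Fin dA × Fin dB → ℂ)
    (hψ : ψ = ∑ k, (lam k : ℂ) • tensorVec (e k) (f k))
    (hunit : IsUnitVec ψ)
    (g : ℝ) (hg : expVal L ψ = (g : ℂ))
    (χ : Fin dA × Fin dB → ℂ)
    (hbi : χ ∈ Submodule.span ℂ
      { v | ∃ (a : Fin dA → ℂ) (b : Fin dB → ℂ),
        (∀ k, dotProduct (star (e k)) a = 0) ∧
        (∀ k, dotProduct (star (f k)) b = 0) ∧ v = tensorVec a b })
    (hLψ : L.mulVec ψ = ((g : ℂ) • ψ) + χ) :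
    ∃ (e' : Fin (min dA dB) → Fin dA → ℂ) (f' : Fin (min dA dB) → Fin dB → ℂ)
      (μ : Fin (min dA dB) → ℝ),
      ONFam e' ∧ ONFam f' ∧
      (∀ k : Fin r, e' (Fin.castLE hrd k) = e k) ∧
      (∀ k : Fin r, f' (Fin.castLE hrd k) = f k) ∧
      (∀ k : Fin r, μ (Fin.castLE hrd k) = g * lam k) ∧
      (∀ k : Fin (min dA dB), r ≤ (k : ℕ) → 0 ≤ μ k) ∧
      L.mulVec ψ = ∑ k, (μ k : ℂ) • tensorVec (e' k) (f' k) :=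
  common_schmidt_decomposition_general dA dB r hrd L lam e f hONe hONf ψ hψ g χ hbi hLψ

end SNpaper
end
end

section
/- (Schmidt-number criterion from projections.) Let φ ∈ H be a unit vector with Schmidt decomposition φ = Σ_{k=1}^{d} κ_k e_k ⊗ f_k, where d = min(d_A, d_B) and κ_1 ≥ κ_2 ≥ … ≥ κ_d ≥ 0, and let ρ be a density operator on H. If ⟨φ, ρ φ⟩ > Σ_{k=1}^{r} κ_k², then ρ has Schmidt number greater than r, i.e., ρ ∉ S_r. -/
open scoped ComplexOrder

noncomputable section

/-! Write `ψ = ∑ⱼ xⱼ ⊗ yⱼ`. Every row `b ↦ ψ (a, b)` lies in the span `K` of the `yⱼ`, which has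
dimension at most `r`, so Cauchy–Schwarz gives `|⟨φ, ψ⟩|² ≤ ∑ₐ ‖P_K φₐ‖² = ∑ₖ κₖ² ‖P_K fₖ‖²`.
The weights `‖P_K fₖ‖²` lie in `[0, 1]` and, `f` being orthonormal, sum to at most `dim K ≤ r`;
for decreasing `κₖ²` such a weighted sum is largest when the weight sits on the first `r` terms.
Finally `⟨φ, σ φ⟩` is a convex combination of the overlaps `|⟨φ, ψᵢ⟩|²` for `σ ∈ S_r`. -/

open Finset InnerProductSpace

lemma sum_mul_le_sum_of_threshold {ι : Type*} [Fintype ι] [DecidableEq ι] (s : Finset ι)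
    {w t : ι → ℝ} {c : ℝ} (hc : 0 ≤ c) (hws : ∀ k ∈ s, c ≤ w k) (hwsc : ∀ k ∉ s, w k ≤ c)
    (ht0 : ∀ k, 0 ≤ t k) (ht1 : ∀ k, t k ≤ 1) (hts : ∑ k, t k ≤ #s) :
    ∑ k, w k * t k ≤ ∑ k ∈ s, w k := by
  have hsplit := sum_add_sum_compl s t
  calc ∑ k, w k * t k = ∑ k ∈ s, w k * t k + ∑ k ∈ sᶜ, w k * t k :=
        (sum_add_sum_compl s _).symm
    _ ≤ ∑ k ∈ s, (w k + c * (t k - 1)) + ∑ k ∈ sᶜ, c * t k := by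
        gcongr with k hk k hk
        · nlinarith [hws k hk, ht1 k]
        · exact ht0 k
        · exact hwsc k (mem_compl.1 hk)
    _ = ∑ k ∈ s, w k + c * (∑ k, t k - #s) := by
        rw [sum_add_distrib, ← mul_sum, ← mul_sum, sum_sub_distrib, ← hsplit]
        simp only [sum_const, nsmul_eq_mul, mul_one]
        ring
    _ ≤ ∑ k ∈ s, w k := by nlinarith

lemma sum_mul_le_sum_castLE {d r : ℕ} (hrd : r ≤ d) {w t : Fin d → ℝ} (hw0 : ∀ k, 0 ≤ w k)
    (hw : Antitone w) (ht0 : ∀ k, 0 ≤ t k) (ht1 : ∀ k, t k ≤ 1) (hts : ∑ k, t k ≤ r) :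
    ∑ k, w k * t k ≤ ∑ k : Fin r, w (Fin.castLE hrd k) := by
  classical
  set s := univ.map (Fin.castLEEmb hrd)
  have hmem : ∀ k, k ∈ s ↔ (k : ℕ) < r := fun k =>
    ⟨fun hk => by obtain ⟨j, -, rfl⟩ := mem_map.1 hk; exact j.isLt,
      fun hk => mem_map.2 ⟨⟨k, hk⟩, mem_univ _, rfl⟩⟩
  have hcard : #s = r := by simp [s]
  rw [← hcard] at hts
  have := sum_mul_le_sum_of_threshold s (w := w) (c := if h : r < d then w ⟨r, h⟩ else 0)
    (by split_ifs <;> simp [hw0]) (fun k hk => ?_) (fun k hk => ?_) ht0 ht1 hts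
  · simpa [s, sum_map] using this
  · rw [hmem] at hk
    split_ifs with h
    · exact hw (Fin.mk_le_mk.2 hk.le)
    · exact hw0 k
  · rw [hmem, not_lt] at hk
    split_ifs with h
    · exact hw (Fin.mk_le_mk.2 hk)
    · exact absurd k.isLt (by omega)

section InnerProduct

variable {E : Type*} [NormedAddCommGroup E] [InnerProductSpace ℂ E]

lemma Submodule.norm_inner_le_norm_starProjection_mul_norm (K : Submodule ℂ E)
    [K.HasOrthogonalProjection] (x : E) {y : E} (hy : y ∈ K) :
    ‖⟪x, y⟫_ℂ‖ ≤ ‖K.starProjection x‖ * ‖y‖ := by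
  rw [← K.starProjection_eq_self_iff.2 hy, ← K.inner_starProjection_left_eq_right,
    K.starProjection_eq_self_iff.2 hy]
  exact norm_inner_le_norm _ _

lemma Submodule.norm_sum_inner_sq_le {ι : Type*} [Fintype ι] (K : Submodule ℂ E)
    [K.HasOrthogonalProjection] (x y : ι → E) (hy : ∀ i, y i ∈ K) :
    ‖∑ i, ⟪x i, y i⟫_ℂ‖ ^ 2 ≤ (∑ i, ‖K.starProjection (x i)‖ ^ 2) * ∑ i, ‖y i‖ ^ 2 := by
  calc ‖∑ i, ⟪x i, y i⟫_ℂ‖ ^ 2 ≤ (∑ i, ‖K.starProjection (x i)‖ * ‖y i‖) ^ 2 := by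
        gcongr
        exact (norm_sum_le _ _).trans
          (sum_le_sum fun i _ => K.norm_inner_le_norm_starProjection_mul_norm _ (hy i))
    _ ≤ _ := sum_mul_sq_le_sq_mul_sq _ _ _

lemma Orthonormal.sum_norm_starProjection_sq_le_finrank {ι : Type*} [Fintype ι] {v : ι → E}
    (hv : Orthonormal ℂ v) (K : Submodule ℂ E) [FiniteDimensional ℂ K] :
    ∑ k, ‖K.starProjection (v k)‖ ^ 2 ≤ Module.finrank ℂ K := by
  set b := stdOrthonormalBasis ℂ K
  have hproj : ∀ x : E, ‖K.starProjection x‖ ^ 2 = ∑ i, ‖⟪x, (b i : E)⟫_ℂ‖ ^ 2 := fun x => by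
    rw [K.starProjection_apply, Submodule.norm_coe, ← b.sum_sq_norm_inner_left]
    simp only [Submodule.inner_orthogonalProjectionOnto_eq_of_mem_right]
  calc ∑ k, ‖K.starProjection (v k)‖ ^ 2 = ∑ i, ∑ k, ‖⟪v k, (b i : E)⟫_ℂ‖ ^ 2 := by
        simp only [hproj]; exact sum_comm
    _ ≤ ∑ i, ‖(b i : E)‖ ^ 2 := sum_le_sum fun i _ => hv.sum_inner_products_le (b i : E)
    _ = Module.finrank ℂ K := by simp only [Submodule.norm_coe, b.orthonormal.1]; simp

end InnerProduct

namespace SNpaper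

lemma ONFam.sum_norm_sq_sum_smul {E : Type*} [NormedAddCommGroup E] [InnerProductSpace ℂ E]
    {n m : ℕ} {e : Fin m → Fin n → ℂ} (he : ONFam e) (c : Fin m → ℂ) (g : Fin m → E) :
    ∑ a, ‖∑ k, (c k * e k a) • g k‖ ^ 2 = ∑ k, ‖c k‖ ^ 2 * ‖g k‖ ^ 2 := by
  have hcoef : ∀ k l, ∑ a, c l * e l a * ((starRingEnd ℂ) (c k * e k a) * ⟪g k, g l⟫_ℂ)
      = if k = l then ((‖c k‖ ^ 2 * ‖g k‖ ^ 2 : ℝ) : ℂ) else 0 := fun k l => by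
    have := he k l
    simp only [dotProduct, Pi.star_apply] at this
    calc _ = (starRingEnd ℂ) (c k) * c l * ⟪g k, g l⟫_ℂ * ∑ a, star (e k a) * e l a := by
          rw [mul_sum]; refine sum_congr rfl fun a _ => ?_
          rw [map_mul]; simp only [RCLike.star_def]; ring
      _ = _ := by
          rw [this]; split_ifs with h
          · subst h; push_cast; rw [inner_self_eq_norm_sq_to_K, RCLike.conj_mul]; simp
          · simp
  have hsum : ∑ a, ⟪∑ k, (c k * e k a) • g k, ∑ l, (c l * e l a) • g l⟫_ℂ
      = ∑ k, ((‖c k‖ ^ 2 * ‖g k‖ ^ 2 : ℝ) : ℂ) := by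
    simp only [sum_inner, inner_sum, inner_smul_left, inner_smul_right, mul_sum]
    rw [sum_comm]
    refine sum_congr rfl fun l _ => ?_
    rw [sum_comm, sum_congr rfl fun k _ => hcoef k l, sum_ite_eq']
    simp
  simpa only [map_sum, inner_self_eq_norm_sq, RCLike.re_to_complex, Complex.ofReal_re] using
    congrArg (RCLike.re (K := ℂ)) hsum

lemma ONFam.orthonormal {n m : ℕ} {e : Fin m → Fin n → ℂ} (he : ONFam e) :
    Orthonormal ℂ fun k => WithLp.toLp 2 (e k) := by
  rw [orthonormal_iff_ite]
  intro k l
  rw [EuclideanSpace.inner_toLp_toLp, dotProduct_comm, he k l]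

variable {dA dB : ℕ}

def row (a : Fin dA) : (Fin dA × Fin dB → ℂ) →ₗ[ℂ] EuclideanSpace ℂ (Fin dB) where
  toFun ψ := WithLp.toLp 2 fun b => ψ (a, b)
  map_add' _ _ := rfl
  map_smul' _ _ := rfl

lemma row_apply (a : Fin dA) (ψ : Fin dA × Fin dB → ℂ) :
    row a ψ = WithLp.toLp 2 fun b => ψ (a, b) := rfl

lemma row_tensorVec (a : Fin dA) (x : Fin dA → ℂ) (y : Fin dB → ℂ) :
    row a (tensorVec x y) = x a • WithLp.toLp 2 y := rfl

lemma dotProduct_star_eq_sum_inner_row (φ ψ : Fin dA × Fin dB → ℂ) :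
    star φ ⬝ᵥ ψ = ∑ a, ⟪row a φ, row a ψ⟫_ℂ := by
  simp only [row_apply, EuclideanSpace.inner_toLp_toLp, dotProduct, Fintype.sum_prod_type,
    Pi.star_apply, mul_comm]

lemma IsUnitVec.sum_norm_row_sq {ψ : Fin dA × Fin dB → ℂ} (hψ : IsUnitVec ψ) :
    ∑ a, ‖row a ψ‖ ^ 2 = 1 := by
  have h := congrArg Complex.re hψ
  rw [dotProduct_star_eq_sum_inner_row, Complex.re_sum] at h
  simpa only [← inner_self_eq_norm_sq (𝕜 := ℂ), RCLike.re_to_complex, Complex.one_re] using h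

lemma SchmidtRankLE.exists_row_mem {r : ℕ} {ψ : Fin dA × Fin dB → ℂ} (hψ : SchmidtRankLE r ψ) :
    ∃ K : Submodule ℂ (EuclideanSpace ℂ (Fin dB)),
      Module.finrank ℂ K ≤ r ∧ ∀ a, row a ψ ∈ K := by
  obtain ⟨x, y, rfl⟩ := hψ
  refine ⟨Submodule.span ℂ (Set.range fun k => WithLp.toLp 2 (y k)), ?_, fun a => ?_⟩
  · simpa [Set.finrank] using finrank_range_le_card (R := ℂ) fun k => WithLp.toLp 2 (y k)
  · simp only [map_sum, row_tensorVec]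
    exact Submodule.sum_mem _ fun k _ => Submodule.smul_mem _ _ (Submodule.subset_span ⟨k, rfl⟩)

lemma SchmidtRankLE.norm_star_dotProduct_sq_le {r d : ℕ} (hrd : r ≤ d) {κ : Fin d → ℝ}
    (hκ0 : ∀ k, 0 ≤ κ k) (hκa : Antitone κ) {e : Fin d → Fin dA → ℂ} {f : Fin d → Fin dB → ℂ}
    (hONe : ONFam e) (hONf : ONFam f) {ψ : Fin dA × Fin dB → ℂ} (hψu : IsUnitVec ψ)
    (hψr : SchmidtRankLE r ψ) :
    ‖star (∑ k, (κ k : ℂ) • tensorVec (e k) (f k)) ⬝ᵥ ψ‖ ^ 2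
      ≤ ∑ k : Fin r, κ (Fin.castLE hrd k) ^ 2 := by
  obtain ⟨K, hKr, hK⟩ := hψr.exists_row_mem
  set t := fun k => ‖K.starProjection (WithLp.toLp 2 (f k))‖ ^ 2
  have hrow : ∀ a, K.starProjection (row a (∑ k, (κ k : ℂ) • tensorVec (e k) (f k)))
      = ∑ k, ((κ k : ℂ) * e k a) • K.starProjection (WithLp.toLp 2 (f k)) := fun a => by
    simp only [map_sum, map_smul, row_tensorVec, smul_smul]
  have ht1 : ∀ k, t k ≤ 1 := fun k => by
    have := K.norm_starProjection_apply_le (WithLp.toLp 2 (f k))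
    rw [hONf.orthonormal.1 k] at this
    exact pow_le_one₀ (norm_nonneg _) this
  have hts : ∑ k, t k ≤ r := (hONf.orthonormal.sum_norm_starProjection_sq_le_finrank K).trans
    (by exact_mod_cast hKr)
  calc _ = ‖∑ a, ⟪row a (∑ k, (κ k : ℂ) • tensorVec (e k) (f k)), row a ψ⟫_ℂ‖ ^ 2 := by
        rw [dotProduct_star_eq_sum_inner_row]
    _ ≤ (∑ a, ‖K.starProjection (row a (∑ k, (κ k : ℂ) • tensorVec (e k) (f k)))‖ ^ 2)
          * ∑ a, ‖row a ψ‖ ^ 2 := K.norm_sum_inner_sq_le _ _ hK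
    _ = ∑ k, κ k ^ 2 * t k := by
        simp only [hrow, hONe.sum_norm_sq_sum_smul, hψu.sum_norm_row_sq, mul_one,
          Complex.norm_real, Real.norm_eq_abs, sq_abs, t]
    _ ≤ _ := sum_mul_le_sum_castLE hrd (fun k => sq_nonneg _)
        (fun i j hij => pow_le_pow_left₀ (hκ0 j) (hκa hij) 2) (fun k => sq_nonneg _) ht1 hts

lemma expVal_projOp (φ ψ : Fin dA × Fin dB → ℂ) :
    expVal (projOp ψ) φ = (‖star φ ⬝ᵥ ψ‖ ^ 2 : ℂ) := by
  rw [expVal, projOp, Matrix.vecMulVec_mulVec, op_smul_eq_smul, dotProduct_smul, smul_eq_mul,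
    Matrix.star_dotProduct, ← Complex.conj_mul']
  rfl

lemma re_expVal_le_of_mem_SNle {r : ℕ} {φ : Fin dA × Fin dB → ℂ} {B : ℝ}
    (hB : ∀ ψ, IsUnitVec ψ → SchmidtRankLE r ψ → ‖star φ ⬝ᵥ ψ‖ ^ 2 ≤ B)
    {σ : Matrix (Fin dA × Fin dB) (Fin dA × Fin dB) ℂ} (hσ : σ ∈ SNle dA dB r) :
    (expVal σ φ).re ≤ B := by
  obtain ⟨N, p, ψ, hp0, hp1, hψu, hψr, rfl⟩ := hσ
  have hexp : expVal (∑ i, (p i : ℂ) • projOp (ψ i)) φ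
      = ∑ i, ((p i * ‖star φ ⬝ᵥ ψ i‖ ^ 2 : ℝ) : ℂ) := by
    simp only [expVal, Matrix.sum_mulVec, Matrix.smul_mulVec, dotProduct_sum, dotProduct_smul]
    refine sum_congr rfl fun i _ => ?_
    rw [← expVal, expVal_projOp]
    push_cast
    rfl
  calc (expVal _ φ).re = ∑ i, p i * ‖star φ ⬝ᵥ ψ i‖ ^ 2 := by
        rw [hexp, Complex.re_sum]; simp only [Complex.ofReal_re]
    _ ≤ ∑ i, p i * B :=
        sum_le_sum fun i _ => mul_le_mul_of_nonneg_left (hB _ (hψu i) (hψr i)) (hp0 i)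
    _ = B := by rw [← sum_mul, hp1, one_mul]

theorem schmidt_number_criterion_projection_general (dA dB r : ℕ)
    (hrd : r ≤ min dA dB)
    (κ : Fin (min dA dB) → ℝ) (hκ0 : ∀ k, 0 ≤ κ k) (hκa : Antitone κ)
    (e : Fin (min dA dB) → Fin dA → ℂ) (f : Fin (min dA dB) → Fin dB → ℂ)
    (hONe : ONFam e) (hONf : ONFam f)
    (φ : Fin dA × Fin dB → ℂ)
    (hφ : φ = ∑ k, (κ k : ℂ) • tensorVec (e k) (f k))
    (ρ : Matrix (Fin dA × Fin dB) (Fin dA × Fin dB) ℂ)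
    (hcond : (∑ k : Fin r, (κ (Fin.castLE hrd k)) ^ 2)
        < (dotProduct (star φ) (ρ.mulVec φ)).re) :
    ρ ∉ SNle dA dB r := by
  subst hφ
  intro hρ
  exact hcond.not_ge <| re_expVal_le_of_mem_SNle
    (fun _ hψu hψr => hψr.norm_star_dotProduct_sq_le hrd hκ0 hκa hONe hONf hψu) hρ

/-- Schmidt-number criterion from a projection: if ⟨φ, ρ φ⟩ exceeds the sum of
the r largest squared Schmidt coefficients of φ, then ρ has Schmidt number greater than r. -/
theorem schmidt_number_criterion_projection (dA dB r : ℕ) (hA : 1 ≤ dA) (hB : 1 ≤ dB)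
    (hr : 1 ≤ r) (hrd : r ≤ min dA dB)
    (κ : Fin (min dA dB) → ℝ) (hκ0 : ∀ k, 0 ≤ κ k) (hκa : Antitone κ)
    (e : Fin (min dA dB) → Fin dA → ℂ) (f : Fin (min dA dB) → Fin dB → ℂ)
    (hONe : ONFam e) (hONf : ONFam f)
    (φ : Fin dA × Fin dB → ℂ)
    (hφ : φ = ∑ k, (κ k : ℂ) • tensorVec (e k) (f k))
    (hunit : IsUnitVec φ)
    (ρ : Matrix (Fin dA × Fin dB) (Fin dA × Fin dB) ℂ)
    (hρ : ρ.PosSemidef) (htr : ρ.trace = 1)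
    (hcond : (∑ k : Fin r, (κ (Fin.castLE hrd k)) ^ 2)
        < (dotProduct (star φ) (ρ.mulVec φ)).re) :
    ρ ∉ SNle dA dB r :=
  schmidt_number_criterion_projection_general dA dB r hrd κ hκ0 hκa e f hONe hONf φ hφ ρ hcond

end SNpaper
end
end

section
/- (Expectation value of the phase-randomized test operator.) Let 0 < ε < 1 and δφ ∈ (0, π]. Then the double series Σ_{m,n=0}^{∞} ε^{2(m+n)} sinc²(δφ·(m−n)) converges and equals (1/(1−ε⁴)) · (1 + 2 Σ_{k=1}^{∞} ε^{2k} sinc²(δφ·k)); consequently (1−ε²)² Σ_{m,n=0}^{∞} ε^{2(m+n)} sinc²(δφ·(m−n)) = ((1−ε²)/(1+ε²)) · (1 + 2 Σ_{k=1}^{∞} ε^{2k} sinc²(δφ·k)). -/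
noncomputable section

namespace SNpaper

/-- The (unnormalized) sinc function: `sinc x = sin x / x` for `x ≠ 0`, `sinc 0 = 1`. -/
def sinc (x : ℝ) : ℝ := if x = 0 then 1 else Real.sin x / x

lemma sinc_neg (x : ℝ) : sinc (-x) = sinc x := by
  rcases eq_or_ne x 0 with rfl | hx
  · simp [sinc]
  · simp [sinc, hx, neg_eq_zero, Real.sin_neg, neg_div_neg_eq]

lemma sinc_sq_le_one (x : ℝ) : sinc x ^ 2 ≤ 1 := by
  rw [sq_le_one_iff_abs_le_one]
  rcases eq_or_ne x 0 with rfl | hx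
  · simp [sinc]
  · rw [sinc, if_neg hx, abs_div, div_le_one (abs_pos.mpr hx)]
    exact Real.abs_sin_le_abs

/-- reindexing equivalence -/
def reidx : ℕ × ℤ ≃ ℕ × ℕ where
  toFun p := (p.1 + p.2.toNat, p.1 + (-p.2).toNat)
  invFun q := (min q.1 q.2, (q.1 : ℤ) - q.2)
  left_inv p := by
    obtain ⟨j, d⟩ := p
    have h1 : min (j + d.toNat) (j + (-d).toNat) = j := by omega
    have h2 : ((j + d.toNat : ℕ) : ℤ) - (j + (-d).toNat : ℕ) = d := by omega
    simp [h1, h2]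
  right_inv q := by
    obtain ⟨m, n⟩ := q
    have h1 : min m n + ((m : ℤ) - n).toNat = m := by omega
    have h2 : min m n + (-((m : ℤ) - n)).toNat = n := by omega
    simp
    omega

/-- the double series Σ_{m,n} ε^{2(m+n)} sinc²(δφ(m−n)) converges and equals
(1/(1−ε⁴))(1 + 2 Σ_{k≥1} ε^{2k} sinc²(δφ k)); consequently
(1−ε²)² Σ_{m,n} ε^{2(m+n)} sinc²(δφ(m−n)) = ((1−ε²)/(1+ε²))(1 + 2 Σ_{k≥1} ε^{2k} sinc²(δφ k)). -/
theorem expectation_phase_randomized (ε δφ : ℝ) (hε0 : 0 < ε) (hε1 : ε < 1)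
    (hδ0 : 0 < δφ) (hδπ : δφ ≤ Real.pi) :
    Summable (fun p : ℕ × ℕ =>
      ε ^ (2 * (p.1 + p.2)) * (sinc (δφ * ((p.1 : ℝ) - (p.2 : ℝ)))) ^ 2) ∧
    (∑' p : ℕ × ℕ, ε ^ (2 * (p.1 + p.2)) * (sinc (δφ * ((p.1 : ℝ) - (p.2 : ℝ)))) ^ 2)
      = (1 / (1 - ε ^ 4)) *
        (1 + 2 * ∑' k : ℕ, ε ^ (2 * (k + 1)) * (sinc (δφ * ((k : ℝ) + 1))) ^ 2) ∧
    (1 - ε ^ 2) ^ 2 *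
        (∑' p : ℕ × ℕ, ε ^ (2 * (p.1 + p.2)) * (sinc (δφ * ((p.1 : ℝ) - (p.2 : ℝ)))) ^ 2)
      = ((1 - ε ^ 2) / (1 + ε ^ 2)) *
        (1 + 2 * ∑' k : ℕ, ε ^ (2 * (k + 1)) * (sinc (δφ * ((k : ℝ) + 1))) ^ 2) := by
  set g : ℕ × ℕ → ℝ :=
    fun p => ε ^ (2 * (p.1 + p.2)) * (sinc (δφ * ((p.1 : ℝ) - (p.2 : ℝ)))) ^ 2 with hg
  set x : ℝ := ε ^ 2 with hx
  have hx0 : 0 < x := by positivity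
  have hx1 : x < 1 := by
    rw [hx]
    exact pow_lt_one₀ hε0.le hε1 (by norm_num)
  set h : ℤ → ℝ := fun d => x ^ d.natAbs * (sinc (δφ * (d : ℝ))) ^ 2 with hh
  have hhnonneg : ∀ d, 0 ≤ h d := fun d => by positivity
  have hhle : ∀ d, h d ≤ x ^ d.natAbs := fun d => by
    simpa using mul_le_mul_of_nonneg_left (sinc_sq_le_one _) (pow_nonneg hx0.le d.natAbs)
  have hgeo : Summable (fun n : ℕ => x ^ n) := summable_geometric_of_lt_one hx0.le hx1
  have hnat : Summable fun n : ℕ => h n := by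
    apply Summable.of_nonneg_of_le (fun n => hhnonneg _) (fun n => ?_) hgeo
    simpa using hhle n
  have hneg : Summable fun n : ℕ => h (-(n + 1)) := by
    apply Summable.of_nonneg_of_le (fun n => hhnonneg _)
      (fun n => le_trans (hhle _) ?_) hgeo
    simp only [Int.natAbs_neg]
    have : ((n : ℤ) + 1).natAbs = n + 1 := by omega
    rw [this]
    exact pow_le_pow_of_le_one hx0.le hx1.le (Nat.le_succ n)
  have hZ : Summable h := Summable.of_nat_of_neg_add_one hnat hneg
  have hnat1 : Summable fun n : ℕ => h ((n : ℤ) + 1) := by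
    refine ((summable_nat_add_iff 1).2 hnat).congr fun n => ?_
    exact congrArg h (by push_cast; ring)
  have hterm : ∀ n : ℕ, h ((n : ℤ) + 1) = ε ^ (2 * (n + 1)) * (sinc (δφ * ((n : ℝ) + 1))) ^ 2 := by
    intro n
    have h1 : ((n : ℤ) + 1).natAbs = n + 1 := by omega
    have h2 : (((n : ℤ) + 1 : ℤ) : ℝ) = (n : ℝ) + 1 := by push_cast; ring
    rw [hh]
    simp only [h1, h2]
    rw [hx, ← pow_mul]
  have hterm' : ∀ n : ℕ, h (-((n : ℤ) + 1)) = h ((n : ℤ) + 1) := by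
    intro n
    rw [hh]
    simp only [Int.natAbs_neg, Int.cast_neg, mul_neg, sinc_neg]
  set T : ℝ := ∑' k : ℕ, ε ^ (2 * (k + 1)) * (sinc (δφ * ((k : ℝ) + 1))) ^ 2 with hT
  have hh0 : h 0 = 1 := by simp [hh, sinc]
  have htsumZ : ∑' d : ℤ, h d = 1 + 2 * T := by
    rw [tsum_of_add_one_of_neg_add_one hnat1 hneg, hh0,
      tsum_congr hterm', tsum_congr hterm, hT]
    ring
  -- the key pointwise identity
  have key : ∀ p : ℕ × ℤ, g (reidx p) = (x ^ 2) ^ p.1 * h p.2 := by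
    rintro ⟨j, d⟩
    have hdiff : ((j + d.toNat : ℕ) : ℝ) - ((j + (-d).toNat : ℕ) : ℝ) = (d : ℝ) := by
      have h3 : ((j + d.toNat : ℕ) : ℤ) - ((j + (-d).toNat : ℕ) : ℤ) = d := by omega
      exact_mod_cast congrArg (fun z : ℤ => (z : ℝ)) h3
    have hsum : (j + d.toNat) + (j + (-d).toNat) = 2 * j + d.natAbs := by omega
    rw [hg, hh]
    simp only [reidx, Equiv.coe_fn_mk]
    rw [hsum, hdiff]
    have hpow : ε ^ (2 * (2 * j + d.natAbs)) = (x ^ 2) ^ j * x ^ d.natAbs := by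
      rw [hx, show 2 * (2 * j + d.natAbs) = 2 * 2 * j + 2 * d.natAbs from by ring,
        pow_add, pow_mul ε (2 * 2) j, pow_mul ε 2 2, pow_mul ε 2 d.natAbs]
    rw [hpow]
    ring
  have hx21 : x ^ 2 < 1 := pow_lt_one₀ hx0.le hx1 (by norm_num)
  have hf : Summable fun j : ℕ => (x ^ 2) ^ j :=
    summable_geometric_of_lt_one (by positivity) hx21
  have hprod : Summable fun p : ℕ × ℤ => (x ^ 2) ^ p.1 * h p.2 :=
    hf.mul_of_nonneg hZ (fun j => by positivity) hhnonneg
  have hsumg : Summable g := by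
    rw [← reidx.summable_iff]
    exact hprod.congr fun p => (key p).symm
  have hx4 : x ^ 2 = ε ^ 4 := by rw [hx, ← pow_mul]
  have hε4 : ε ^ 4 < 1 := pow_lt_one₀ hε0.le hε1 (by norm_num)
  have htsum : ∑' p : ℕ × ℕ, g p = (1 / (1 - ε ^ 4)) * (1 + 2 * T) := by
    rw [← reidx.tsum_eq g, tsum_congr key, ← Summable.tsum_mul_tsum hf hZ hprod, htsumZ]
    rw [tsum_geometric_of_lt_one (by positivity) hx21, hx4, one_div]
  refine ⟨hsumg, htsum, ?_⟩
  rw [htsum]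
  have h1 : (1 : ℝ) - ε ^ 4 ≠ 0 := by nlinarith
  have h2 : (1 : ℝ) + ε ^ 2 ≠ 0 := by positivity
  field_simp
  ring
end SNpaper
end
end

section
/- (f_1 of the phase-randomized two-mode squeezed-vacuum operator.) Let 0 < ε < 1 and δφ ∈ (0, π], and define γ_{m,n} = (1−ε²) ε^{m+n} sinc(δφ·(m−n)) for m, n ∈ ℕ. Then sup{ Σ_{m,n=0}^{∞} γ_{m,n} · conj(x(m)·y(m)) · x(n)·y(n) : x, y ∈ ℓ²(ℕ), ‖x‖ = ‖y‖ = 1 } = 1 − ε²; i.e., the maximal expectation value of the phase-randomized two-mode squeezed-vacuum operator over unit product vectors x ⊗ y equals 1 − ε², attained at x = y = e_0. -/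
noncomputable section

namespace SNpaper

/-- Matrix elements of the phase-randomized two-mode squeezed-vacuum operator:
`γ_{m,n} = (1−ε²) ε^{m+n} sinc(δφ(m−n))`. -/
def gamPR (ε δφ : ℝ) (m n : ℕ) : ℝ :=
  (1 - ε ^ 2) * ε ^ (m + n) * sinc (δφ * ((m : ℝ) - (n : ℝ)))

lemma abs_sinc_le_one (x : ℝ) : |sinc x| ≤ 1 := by
  unfold sinc
  split_ifs with h
  · simp
  · rw [abs_div]
    exact div_le_one_of_le₀ Real.abs_sin_le_abs (abs_nonneg x)

/-- the maximal expectation value of the phase-randomized two-mode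
squeezed-vacuum operator over unit product vectors `x ⊗ y` equals `1 − ε²`, attained at
`x = y = e₀`. -/
theorem f1_phase_randomized (ε δφ : ℝ) (hε0 : 0 < ε) (hε1 : ε < 1)
    (hδ0 : 0 < δφ) (hδπ : δφ ≤ Real.pi) :
    sSup { t : ℝ | ∃ x y : ℕ → ℂ,
        (∑' n : ℕ, ‖x n‖ ^ 2) = 1 ∧ (∑' n : ℕ, ‖y n‖ ^ 2) = 1 ∧
        (∑' p : ℕ × ℕ, (gamPR ε δφ p.1 p.2 : ℂ) *
          star (x p.1 * y p.1) * (x p.2 * y p.2)).re = t }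
      = 1 - ε ^ 2 ∧
    (∑' p : ℕ × ℕ, (gamPR ε δφ p.1 p.2 : ℂ) *
        star ((fun n : ℕ => if n = 0 then (1 : ℂ) else 0) p.1 *
              (fun n : ℕ => if n = 0 then (1 : ℂ) else 0) p.1) *
        ((fun n : ℕ => if n = 0 then (1 : ℂ) else 0) p.2 *
         (fun n : ℕ => if n = 0 then (1 : ℂ) else 0) p.2)).re = 1 - ε ^ 2 := by
  have hε2 : (0:ℝ) ≤ 1 - ε ^ 2 := by nlinarith
  -- bound on gamma
  have hγ : ∀ m n : ℕ, |gamPR ε δφ m n| ≤ 1 - ε ^ 2 := by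
    intro m n
    rw [gamPR, abs_mul, abs_mul, abs_of_nonneg hε2, abs_of_nonneg (pow_nonneg hε0.le _)]
    calc (1 - ε ^ 2) * ε ^ (m + n) * |sinc (δφ * ((m : ℝ) - (n : ℝ)))|
        ≤ (1 - ε ^ 2) * 1 * 1 := by
          gcongr
          · exact pow_le_one₀ hε0.le hε1.le
          · exact abs_sinc_le_one _
      _ = 1 - ε ^ 2 := by ring
  -- upper bound for every member of the set
  have key : ∀ x y : ℕ → ℂ, (∑' n : ℕ, ‖x n‖ ^ 2) = 1 → (∑' n : ℕ, ‖y n‖ ^ 2) = 1 →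
      (∑' p : ℕ × ℕ, (gamPR ε δφ p.1 p.2 : ℂ) *
        star (x p.1 * y p.1) * (x p.2 * y p.2)).re ≤ 1 - ε ^ 2 := by
    intro x y hx hy
    set a : ℕ → ℝ := fun n => ‖x n‖ * ‖y n‖ with ha_def
    have hx2 : Summable (fun n => ‖x n‖ ^ 2) := by
      by_contra h
      rw [tsum_eq_zero_of_not_summable h] at hx
      norm_num at hx
    have hy2 : Summable (fun n => ‖y n‖ ^ 2) := by
      by_contra h
      rw [tsum_eq_zero_of_not_summable h] at hy
      norm_num at hy
    have hbound : ∀ n, a n ≤ (‖x n‖ ^ 2 + ‖y n‖ ^ 2) / 2 := by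
      intro n
      have := sq_nonneg (‖x n‖ - ‖y n‖)
      simp only [ha_def]
      nlinarith
    have hsum2 : Summable (fun n => (‖x n‖ ^ 2 + ‖y n‖ ^ 2) / 2) := (hx2.add hy2).div_const 2
    have ha : Summable a :=
      Summable.of_nonneg_of_le (fun n => mul_nonneg (norm_nonneg _) (norm_nonneg _))
        hbound hsum2
    have ha_nonneg : (0:ℝ) ≤ ∑' n, a n :=
      tsum_nonneg fun n => mul_nonneg (norm_nonneg _) (norm_nonneg _)
    have ha_le : (∑' n, a n) ≤ 1 := by
      calc (∑' n, a n) ≤ ∑' n, (‖x n‖ ^ 2 + ‖y n‖ ^ 2) / 2 := Summable.tsum_le_tsum hbound ha hsum2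
        _ = 1 := by
            rw [tsum_div_const, Summable.tsum_add hx2 hy2, hx, hy]
            norm_num
    -- product summability
    have hab : Summable (fun p : ℕ × ℕ => a p.1 * a p.2) :=
      ha.mul_of_nonneg ha (fun n => mul_nonneg (norm_nonneg _) (norm_nonneg _))
        (fun n => mul_nonneg (norm_nonneg _) (norm_nonneg _))
    have htermb : ∀ p : ℕ × ℕ,
        ‖(gamPR ε δφ p.1 p.2 : ℂ) * star (x p.1 * y p.1) * (x p.2 * y p.2)‖
          ≤ (1 - ε ^ 2) * (a p.1 * a p.2) := by
      intro p
      rw [norm_mul, norm_mul, norm_star, norm_mul, norm_mul, Complex.norm_real]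
      calc ‖gamPR ε δφ p.1 p.2‖ * (‖x p.1‖ * ‖y p.1‖) * (‖x p.2‖ * ‖y p.2‖)
          ≤ (1 - ε ^ 2) * (‖x p.1‖ * ‖y p.1‖) * (‖x p.2‖ * ‖y p.2‖) := by
            have h1 : ‖gamPR ε δφ p.1 p.2‖ ≤ 1 - ε ^ 2 := by
              rw [Real.norm_eq_abs]; exact hγ p.1 p.2
            exact mul_le_mul_of_nonneg_right
              (mul_le_mul_of_nonneg_right h1 (by positivity)) (by positivity)
        _ = (1 - ε ^ 2) * (a p.1 * a p.2) := by simp only [ha_def]; ring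
    have hnorm_sum : Summable (fun p : ℕ × ℕ =>
        ‖(gamPR ε δφ p.1 p.2 : ℂ) * star (x p.1 * y p.1) * (x p.2 * y p.2)‖) :=
      Summable.of_nonneg_of_le (fun p => norm_nonneg _) htermb (hab.mul_left _)
    calc (∑' p : ℕ × ℕ, (gamPR ε δφ p.1 p.2 : ℂ) *
            star (x p.1 * y p.1) * (x p.2 * y p.2)).re
        ≤ ‖∑' p : ℕ × ℕ, (gamPR ε δφ p.1 p.2 : ℂ) *
            star (x p.1 * y p.1) * (x p.2 * y p.2)‖ := Complex.re_le_norm _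
      _ ≤ ∑' p : ℕ × ℕ, ‖(gamPR ε δφ p.1 p.2 : ℂ) *
            star (x p.1 * y p.1) * (x p.2 * y p.2)‖ := norm_tsum_le_tsum_norm hnorm_sum
      _ ≤ ∑' p : ℕ × ℕ, (1 - ε ^ 2) * (a p.1 * a p.2) :=
            Summable.tsum_le_tsum htermb hnorm_sum (hab.mul_left _)
      _ = (1 - ε ^ 2) * ((∑' n, a n) * (∑' n, a n)) := by
            have han : Summable (fun n => ‖a n‖) :=
              ha.congr fun n =>
                (Real.norm_of_nonneg (mul_nonneg (norm_nonneg _) (norm_nonneg _))).symm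
            rw [tsum_mul_left]
            congr 1
            rw [← tsum_mul_tsum_of_summable_norm han han]
      _ ≤ 1 - ε ^ 2 := by
            have h4 : (∑' n, a n) * (∑' n, a n) ≤ 1 := by nlinarith
            calc (1 - ε ^ 2) * ((∑' n, a n) * (∑' n, a n)) ≤ (1 - ε ^ 2) * 1 :=
                  mul_le_mul_of_nonneg_left h4 hε2
              _ = 1 - ε ^ 2 := mul_one _
  -- the witness e₀
  set f : ℕ → ℂ := fun n => if n = 0 then (1 : ℂ) else 0 with hf_def
  have hf2 : (∑' n : ℕ, ‖f n‖ ^ 2) = 1 := by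
    rw [tsum_eq_single 0 (fun b hb => by simp [hf_def, hb])]
    simp [hf_def]
  have he0 : (∑' p : ℕ × ℕ, (gamPR ε δφ p.1 p.2 : ℂ) *
      star (f p.1 * f p.1) * (f p.2 * f p.2)).re = 1 - ε ^ 2 := by
    have hside : ∀ p : ℕ × ℕ, p ≠ (0, 0) → (gamPR ε δφ p.1 p.2 : ℂ) *
        star (f p.1 * f p.1) * (f p.2 * f p.2) = 0 := by
      rintro ⟨m, n⟩ hp
      by_cases hm : m = 0
      · have hn : n ≠ 0 := by
          intro hn; exact hp (by simp [hm, hn])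
        simp [hf_def, hn]
      · simp [hf_def, hm]
    rw [tsum_eq_single ((0, 0) : ℕ × ℕ) hside]
    have hg00 : gamPR ε δφ 0 0 = 1 - ε ^ 2 := by
      simp [gamPR, sinc]
    simp [hf_def, hg00, ← Complex.ofReal_pow]
  refine ⟨?_, he0⟩
  have hmem : (1 - ε ^ 2) ∈ { t : ℝ | ∃ x y : ℕ → ℂ,
      (∑' n : ℕ, ‖x n‖ ^ 2) = 1 ∧ (∑' n : ℕ, ‖y n‖ ^ 2) = 1 ∧
      (∑' p : ℕ × ℕ, (gamPR ε δφ p.1 p.2 : ℂ) *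
        star (x p.1 * y p.1) * (x p.2 * y p.2)).re = t } := ⟨f, f, hf2, hf2, he0⟩
  apply le_antisymm
  · apply csSup_le ⟨1 - ε ^ 2, hmem⟩
    rintro t ⟨x, y, hx, hy, rfl⟩
    exact key x y hx hy
  · exact le_csSup ⟨1 - ε ^ 2, by rintro t ⟨x, y, hx, hy, rfl⟩; exact key x y hx hy⟩ hmem

end SNpaper
end
end
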